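/- arXiv:2205.14416 — 8 statements merged into one kernel-verified Lean document; each statement's English description precedes it below -/
import Mathlib

section
/- Let q > 0 and let z, w be complex numbers with Re z ≥ 0, Re w ≥ 0 and q ≥ |z - w|. Then Re(1/(q + z)) ≤ 8 * Re(1/(q + w)). -/
/-! Put `u = q + z` and `v = q + w`, so that `‖u - v‖ ≤ q ≤ re u, re v`. Then `re u ≤ re v + q ≤ 2 re v`
and `‖v‖ ≤ ‖u‖ + q ≤ ‖u‖ + re u ≤ 2 ‖u‖`; since `re (1/u) = re u / ‖u‖²`, the two factors `2` and
`2² = 4` give the constant `8`. -/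

namespace Complex

variable {u v : ℂ} {r : ℝ}

theorem re_le_two_mul_re_of_norm_sub_le (huv : ‖u - v‖ ≤ r) (hv : r ≤ v.re) :
    u.re ≤ 2 * v.re := by
  have : u.re - v.re ≤ ‖u - v‖ := by
    simpa using (re_le_norm (u - v))
  linarith

theorem norm_le_two_mul_norm_of_norm_sub_le (huv : ‖u - v‖ ≤ r) (hu : r ≤ u.re) :
    ‖v‖ ≤ 2 * ‖u‖ := by
  calc ‖v‖ ≤ ‖u‖ + ‖u - v‖ := norm_le_norm_add_norm_sub u v
    _ ≤ ‖u‖ + u.re := by linarith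
    _ ≤ 2 * ‖u‖ := by linarith [re_le_norm u]

theorem inv_re_le_eight_mul_inv_re_of_norm_sub_le (hr : 0 < r) (huv : ‖u - v‖ ≤ r)
    (hu : r ≤ u.re) (hv : r ≤ v.re) : (u⁻¹).re ≤ 8 * (v⁻¹).re := by
  have hv₀ : 0 < ‖v‖ := (hr.trans_le hv).trans_le (re_le_norm v)
  have hvu : ‖v‖ ^ 2 ≤ 4 * ‖u‖ ^ 2 := by
    nlinarith [norm_le_two_mul_norm_of_norm_sub_le huv hu, norm_nonneg v]
  rw [inv_re, inv_re, normSq_eq_norm_sq, normSq_eq_norm_sq]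
  calc u.re / ‖u‖ ^ 2 ≤ 2 * v.re / ‖u‖ ^ 2 := by
        gcongr; exact re_le_two_mul_re_of_norm_sub_le huv hv
    _ ≤ 2 * v.re / (‖v‖ ^ 2 / 4) := by
        gcongr <;> linarith
    _ = 8 * (v.re / ‖v‖ ^ 2) := by ring

end Complex

/-- If `q > 0`, `Re z ≥ 0`, `Re w ≥ 0` and `q ≥ |z - w|`, then
`Re(1/(q + z)) ≤ 8 · Re(1/(q + w))`. -/
theorem stmt_2 (q : ℝ) (hq : 0 < q) (z w : ℂ) (hz : 0 ≤ z.re) (hw : 0 ≤ w.re)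
    (hqzw : ‖z - w‖ ≤ q) :
    (((q : ℂ) + z)⁻¹).re ≤ 8 * (((q : ℂ) + w)⁻¹).re :=
  Complex.inv_re_le_eight_mul_inv_re_of_norm_sub_le hq (by simpa using hqzw)
    (by simpa using hz) (by simpa using hw)
end

section
/- Let φ : [0,∞) × [0,1] → [0,∞) be bounded measurable, let (λ_n) be a uniform stick-breaking process on [0,T] and (V_n) an independent i.i.d. Uniform(0,1) sequence. Then E[Σ_{n=1}^∞ φ(λ_n, V_n)] = ∫_0^T φ̄(t)/t dt, where φ̄(t) = ∫_0^1 φ(t,u) du. -/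
open MeasureTheory ProbabilityTheory Real Set ENNReal Filter Topology

/-!
Write `F k = logPrimitive k`, so `F k x = ∫_0^x k(t) dt/t`. Breaking a stick of length `ℓ` at
a uniform point, Fubini gives the renewal identity `E[k(piece)] + E[F k(rest)] = F k(ℓ)`. Applied
to the stick `L_n`, this makes `E[k(λ_{n+1})] = E[F k(L_n)] - E[F k(L_{n+1})]` telescope, so
`Σ_n E[k(λ_{n+1})] = F k(T)` as soon as `E[F k(L_n)] → 0`. That holds when `k` is bounded and
vanishes near `0`, since then `F k(x) = O(x)` while `E[L_n] = T 2⁻ⁿ`; monotone convergence removes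
the vanishing condition. Finally `V_{n+1}` is independent of `λ_{n+1}`, so `φ(λ_{n+1}, V_{n+1})`
may be replaced by `φ̄(λ_{n+1})`.
-/

theorem ENNReal.tsum_iSup_of_monotone {α ι : Type*} [Preorder ι] [IsDirectedOrder ι]
    {f : α → ι → ℝ≥0∞} (hf : ∀ a, Monotone (f a)) :
    ∑' a, ⨆ i, f a i = ⨆ i, ∑' a, f a i := by
  simp_rw [ENNReal.tsum_eq_iSup_sum, finsetSum_iSup_of_monotone hf]
  exact iSup_comm

theorem ENNReal.tsum_eq_of_add_succ_eq {a b : ℕ → ℝ≥0∞} (hab : ∀ n, a n + b (n + 1) = b n)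
    (hb : Tendsto b atTop (𝓝 0)) : ∑' n, a n = b 0 := by
  have hsum : ∀ N, ∑ n ∈ Finset.range N, a n + b N = b 0 := by
    intro N
    induction N with
    | zero => simp
    | succ N ih => rw [Finset.sum_range_succ, add_assoc, hab, ih]
  have := (ENNReal.tendsto_nat_tsum a).add hb
  simp only [hsum, add_zero] at this
  exact (tendsto_nhds_unique tendsto_const_nhds this).symm

theorem setLIntegral_Ioo_comp_mul {q : ℝ → ℝ≥0∞} {ℓ : ℝ} (hℓ : 0 < ℓ) :
    ∫⁻ u in Ioo 0 1, q (ℓ * u) = ENNReal.ofReal ℓ⁻¹ * ∫⁻ t in Ioo 0 ℓ, q t := by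
  have he : MeasurableEmbedding (ℓ * ·) := (Homeomorph.mulLeft₀ ℓ hℓ.ne').measurableEmbedding
  rw [(MeasurePreserving.mk he.measurable rfl).setLIntegral_comp_emb he, image_mul_left_Ioo hℓ,
    Real.map_volume_mul_left hℓ.ne', Measure.restrict_smul, lintegral_smul_measure,
    abs_of_pos (inv_pos.2 hℓ), smul_eq_mul, mul_zero, mul_one]

theorem setLIntegral_Ioo_comp_one_sub (q : ℝ → ℝ≥0∞) :
    ∫⁻ u in Ioo 0 1, q (1 - u) = ∫⁻ u in Ioo 0 1, q u := by
  have hmem : ∀ u : ℝ, 1 - u ∈ Ioo (0 : ℝ) 1 ↔ u ∈ Ioo (0 : ℝ) 1 := fun u => by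
    simp only [mem_Ioo]; constructor <;> rintro ⟨h, h'⟩ <;> constructor <;> linarith
  rw [← lintegral_indicator measurableSet_Ioo, ← lintegral_indicator measurableSet_Ioo,
    ← lintegral_sub_left_eq_self _ 1]
  congr with u
  by_cases hu : u ∈ Ioo (0 : ℝ) 1 <;> simp [indicator, hu, hmem]

theorem setLIntegral_Ioo_setLIntegral_Ioc {f : ℝ → ℝ≥0∞} (hf : Measurable f) (ℓ : ℝ) :
    ∫⁻ x in Ioo 0 ℓ, ∫⁻ t in Ioc 0 x, f t = ∫⁻ t in Ioc 0 ℓ, f t * ENNReal.ofReal (ℓ - t) := by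
  have hmeas : Measurable (Function.uncurry fun x t : ℝ => (Ioc 0 x).indicator f t) := by
    have : MeasurableSet {p : ℝ × ℝ | p.2 ∈ Ioc 0 p.1} :=
      (measurableSet_lt measurable_const measurable_snd).inter
        (measurableSet_le measurable_snd measurable_fst)
    exact (hf.comp measurable_snd).indicator this
  have hslice : ∀ t, ∫⁻ x in Ioo 0 ℓ, (Ioc 0 x).indicator f t
      = (Ioc 0 ℓ).indicator (fun t => f t * ENNReal.ofReal (ℓ - t)) t := by
    intro t
    rcases le_or_gt t 0 with ht | ht
    · simp [indicator, not_lt.2 ht]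
    have : ∀ x, (Ioc 0 x).indicator f t = (Ici t).indicator (fun _ => f t) x := fun x => by
      simp [indicator, ht]
    simp_rw [this]
    rw [lintegral_indicator measurableSet_Ici, setLIntegral_const,
      Measure.restrict_apply measurableSet_Ici]
    rcases le_or_gt t ℓ with htℓ | htℓ
    · rw [indicator_of_mem (show t ∈ Ioc 0 ℓ from ⟨ht, htℓ⟩), show Ici t ∩ Ioo 0 ℓ = Ico t ℓ by
        ext x; simp only [mem_inter_iff, mem_Ici, mem_Ioo, mem_Ico]; grind, Real.volume_Ico]
    · rw [indicator_of_notMem (fun h => (not_le.2 htℓ) h.2), show Ici t ∩ Ioo 0 ℓ = ∅ by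
        ext x; simp only [mem_inter_iff, mem_Ici, mem_Ioo, mem_empty_iff_false, iff_false]
        grind, measure_empty, mul_zero]
  simp_rw [← lintegral_indicator measurableSet_Ioc (f := fun t => _ * _), ← hslice,
    ← lintegral_indicator measurableSet_Ioc]
  exact lintegral_lintegral_swap hmeas.aemeasurable

noncomputable def logPrimitive (k : ℝ → ℝ≥0∞) (x : ℝ) : ℝ≥0∞ :=
  ∫⁻ t in Ioc 0 x, k t / ENNReal.ofReal t

theorem monotone_logPrimitive (k : ℝ → ℝ≥0∞) : Monotone (logPrimitive k) :=
  fun _ _ hxy => lintegral_mono_set (Ioc_subset_Ioc_right hxy)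

theorem logPrimitive_le {k : ℝ → ℝ≥0∞} {c : ℝ≥0∞} {ε : ℝ} (hkc : ∀ t, k t ≤ c)
    (hk0 : ∀ t ≤ ε, k t = 0) (x : ℝ) :
    logPrimitive k x ≤ c / ENNReal.ofReal ε * ENNReal.ofReal x := by
  have hpt : ∀ t, k t / ENNReal.ofReal t ≤ c / ENNReal.ofReal ε := fun t => by
    rcases le_or_gt t ε with h | h
    · simp [hk0 t h]
    · exact ENNReal.div_le_div (hkc t) (ENNReal.ofReal_le_ofReal h.le)
  calc logPrimitive k x ≤ ∫⁻ _ in Ioc 0 x, c / ENNReal.ofReal ε := lintegral_mono hpt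
    _ = c / ENNReal.ofReal ε * ENNReal.ofReal x := by
      rw [setLIntegral_const, Real.volume_Ioc, sub_zero]

theorem add_logPrimitive_eq {k : ℝ → ℝ≥0∞} (hk : Measurable k) (ℓ : ℝ) :
    (∫⁻ t in Ioo 0 ℓ, k t) + ∫⁻ x in Ioo 0 ℓ, logPrimitive k x
      = ENNReal.ofReal ℓ * logPrimitive k ℓ := by
  have hkt : Measurable fun t => k t / ENNReal.ofReal t := hk.div ENNReal.measurable_ofReal
  unfold logPrimitive
  rw [setLIntegral_Ioo_setLIntegral_Ioc hkt, Measure.restrict_congr_set Ioo_ae_eq_Ioc,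
    ← lintegral_add_left hk, ← lintegral_const_mul _ hkt]
  refine setLIntegral_congr_fun measurableSet_Ioc fun t ⟨ht, htℓ⟩ => ?_
  have hsplit : ENNReal.ofReal ℓ = ENNReal.ofReal t + ENNReal.ofReal (ℓ - t) := by
    rw [← ENNReal.ofReal_add ht.le (sub_nonneg.2 htℓ), add_sub_cancel]
  rw [hsplit, add_mul, ENNReal.mul_div_cancel (by simpa using ht) ENNReal.ofReal_ne_top, mul_comm]

theorem logPrimitive_renewal {k : ℝ → ℝ≥0∞} (hk : Measurable k) {ℓ : ℝ} (hℓ : 0 < ℓ) :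
    (∫⁻ u in Ioo 0 1, k (ℓ * (1 - u))) + ∫⁻ u in Ioo 0 1, logPrimitive k (ℓ * u)
      = logPrimitive k ℓ := by
  rw [setLIntegral_Ioo_comp_one_sub fun u => k (ℓ * u), setLIntegral_Ioo_comp_mul hℓ,
    setLIntegral_Ioo_comp_mul hℓ, ← mul_add, add_logPrimitive_eq hk ℓ, ← mul_assoc,
    ← ENNReal.ofReal_mul (inv_nonneg.2 hℓ.le), inv_mul_cancel₀ hℓ.ne', ENNReal.ofReal_one, one_mul]

theorem setLIntegral_Ioo_ofReal_id : ∫⁻ u in Ioo 0 1, ENNReal.ofReal u = 2⁻¹ := by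
  rw [← ofReal_integral_eq_lintegral_ofReal, integral_Ioc_eq_integral_Ioo.symm,
    ← intervalIntegral.integral_of_le zero_le_one, integral_id]
  · norm_num [ENNReal.ofReal_div_of_pos]
  · exact (intervalIntegral.intervalIntegrable_id.1).mono_set Ioo_subset_Ioc_self
  · exact (ae_restrict_mem measurableSet_Ioo).mono fun u hu => hu.1.le

section Independence

variable {Ω α β : Type*} [MeasurableSpace Ω] [MeasurableSpace α] [MeasurableSpace β]
  {μ : Measure Ω}

theorem ProbabilityTheory.IndepFun.lintegral_comp_eq [IsFiniteMeasure μ] {X : Ω → α} {Y : Ω → β}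
    (h : IndepFun X Y μ) (hX : Measurable X) (hY : Measurable Y) {G : α → β → ℝ≥0∞}
    (hG : Measurable (Function.uncurry G)) :
    ∫⁻ ω, G (X ω) (Y ω) ∂μ = ∫⁻ ω, ∫⁻ y, G (X ω) y ∂(μ.map Y) ∂μ := by
  calc ∫⁻ ω, G (X ω) (Y ω) ∂μ = ∫⁻ p, Function.uncurry G p ∂(μ.map fun ω => (X ω, Y ω)) :=
        (lintegral_map hG (hX.prodMk hY)).symm
    _ = ∫⁻ ω, ∫⁻ y, G (X ω) y ∂(μ.map Y) ∂μ := by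
      rw [(indepFun_iff_map_prod_eq_prod_map_map hX.aemeasurable hY.aemeasurable).1 h,
        lintegral_prod _ hG.aemeasurable]
      exact lintegral_map hG.lintegral_prod_right hX

theorem ProbabilityTheory.iIndepFun.indepFun_of_measurable_iSup {ι : Type*} {f : ι → Ω → α}
    (hf : iIndepFun f μ) (hmeas : ∀ i, Measurable (f i)) {S : Set ι} {j : ι} (hj : j ∉ S)
    {X : Ω → β} (hX : Measurable[⨆ i ∈ S, MeasurableSpace.comap (f i) inferInstance] X) :
    IndepFun X (f j) μ := by
  have h := indep_iSup_of_disjoint (fun i => (hmeas i).comap_le) hf.iIndep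
    (disjoint_singleton_right.2 hj)
  simp only [mem_singleton_iff, iSup_iSup_eq_left] at h
  exact (IndepFun_iff_Indep _ _ _).2 (indep_of_indep_of_le_left h hX.comap_le)

theorem ae_forall_mem_of_map_eq_restrict {ι : Type*} [Countable ι] {X : ι → Ω → α}
    (hX : ∀ i, Measurable (X i)) {ν : Measure α} {s : Set α} (hs : MeasurableSet s)
    (h : ∀ i, μ.map (X i) = ν.restrict s) : ∀ᵐ ω ∂μ, ∀ i, X i ω ∈ s :=
  ae_all_iff.2 fun i => ae_of_ae_map (hX i).aemeasurable (h i ▸ ae_restrict_mem hs)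

end Independence

theorem measurable_iSup_comap_of_mem {Ω α ι : Type*} [MeasurableSpace α] {f : ι → Ω → α}
    {S : Set ι} {i : ι} (hi : i ∈ S) :
    Measurable[⨆ j ∈ S, MeasurableSpace.comap (f j) inferInstance] (f i) :=
  (comap_measurable (f i)).mono
    (le_iSup₂ (f := fun j _ => MeasurableSpace.comap (f j) inferInstance) i hi) le_rfl

section StickBreaking

variable {Ω : Type*} {T : ℝ} {U V L : ℕ → Ω → ℝ}

theorem measurable_stick {m : MeasurableSpace Ω} (hL0 : ∀ ω, L 0 ω = T)
    (hL : ∀ n ω, L (n + 1) ω = U (n + 1) ω * L n ω) {n : ℕ}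
    (hU : ∀ k ≤ n, Measurable[m] (U k)) : Measurable[m] (L n) := by
  induction n with
  | zero => exact (funext hL0 : L 0 = fun _ => T) ▸ measurable_const
  | succ n ih =>
    rw [show L (n + 1) = U (n + 1) * L n from funext (hL n)]
    exact (hU _ le_rfl).mul (ih fun k hk => hU k (hk.trans n.le_succ))

theorem measurable_iSup_comap_stick (hL0 : ∀ ω, L 0 ω = T)
    (hL : ∀ n ω, L (n + 1) ω = U (n + 1) ω * L n ω) {s : Set ℕ} {n : ℕ} (hn : Iic n ⊆ s) :
    Measurable[⨆ i ∈ Sum.inl '' s, MeasurableSpace.comap (Sum.elim U V i) inferInstance] (L n) :=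
  measurable_stick hL0 hL fun _ hk => measurable_iSup_comap_of_mem (mem_image_of_mem _ (hn hk))

variable [MeasurableSpace Ω] {μ : Measure Ω}

theorem indepFun_stick_succ (hUmeas : ∀ n, Measurable (U n)) (hVmeas : ∀ n, Measurable (V n))
    (hindep : iIndepFun (Sum.elim U V) μ) (hL0 : ∀ ω, L 0 ω = T)
    (hL : ∀ n ω, L (n + 1) ω = U (n + 1) ω * L n ω) (n : ℕ) :
    IndepFun (L n) (U (n + 1)) μ :=
  hindep.indepFun_of_measurable_iSup (Sum.forall.2 ⟨hUmeas, hVmeas⟩) (j := Sum.inl (n + 1))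
    (S := Sum.inl '' Iic n) (by simp) (measurable_iSup_comap_stick hL0 hL subset_rfl)

theorem indepFun_stick_piece (hUmeas : ∀ n, Measurable (U n)) (hVmeas : ∀ n, Measurable (V n))
    (hindep : iIndepFun (Sum.elim U V) μ) (hL0 : ∀ ω, L 0 ω = T)
    (hL : ∀ n ω, L (n + 1) ω = U (n + 1) ω * L n ω) (n : ℕ) :
    IndepFun (fun ω => L n ω * (1 - U (n + 1) ω)) (V (n + 1)) μ :=
  hindep.indepFun_of_measurable_iSup (Sum.forall.2 ⟨hUmeas, hVmeas⟩) (j := Sum.inr (n + 1))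
    (S := Sum.inl '' univ) (by simp) <|
    (measurable_iSup_comap_stick hL0 hL (subset_univ _)).mul
      (measurable_const.sub (measurable_iSup_comap_of_mem (f := Sum.elim U V)
        (mem_image_of_mem _ (mem_univ (n + 1)))))

theorem ae_stick_pos (hT : 0 < T) (hL0 : ∀ ω, L 0 ω = T)
    (hL : ∀ n ω, L (n + 1) ω = U (n + 1) ω * L n ω)
    (hU : ∀ᵐ ω ∂μ, ∀ n, 0 < U n ω) : ∀ᵐ ω ∂μ, ∀ n, 0 < L n ω := by
  filter_upwards [hU] with ω hω n
  induction n with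
  | zero => rwa [hL0]
  | succ n ih => rw [hL]; exact mul_pos (hω _) ih

variable [IsProbabilityMeasure μ]

theorem lintegral_comp_stick_succ (hUmeas : ∀ n, Measurable (U n))
    (hLU : ∀ n, IndepFun (L n) (U (n + 1)) μ)
    (hUunif : ∀ n, μ.map (U n) = volume.restrict (Ioo 0 1))
    (hL0 : ∀ ω, L 0 ω = T) (hL : ∀ n ω, L (n + 1) ω = U (n + 1) ω * L n ω)
    {G : ℝ → ℝ → ℝ≥0∞} (hG : Measurable (Function.uncurry G)) (n : ℕ) :
    ∫⁻ ω, G (L n ω) (U (n + 1) ω) ∂μ = ∫⁻ ω, (∫⁻ u in Ioo 0 1, G (L n ω) u) ∂μ := by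
  rw [(hLU n).lintegral_comp_eq (measurable_stick hL0 hL fun i _ => hUmeas i) (hUmeas _) hG,
    hUunif]

theorem lintegral_ofReal_stick (hUmeas : ∀ n, Measurable (U n))
    (hLU : ∀ n, IndepFun (L n) (U (n + 1)) μ)
    (hUunif : ∀ n, μ.map (U n) = volume.restrict (Ioo 0 1))
    (hL0 : ∀ ω, L 0 ω = T) (hL : ∀ n ω, L (n + 1) ω = U (n + 1) ω * L n ω) (n : ℕ) :
    ∫⁻ ω, ENNReal.ofReal (L n ω) ∂μ = ENNReal.ofReal T * 2⁻¹ ^ n := by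
  induction n with
  | zero => simp [hL0]
  | succ n ih =>
    have hmeas : Measurable (Function.uncurry fun x u : ℝ => ENNReal.ofReal (x * u)) := by
      fun_prop
    have hhalf : ∀ x : ℝ, ∫⁻ u in Ioo 0 1, ENNReal.ofReal (x * u) = ENNReal.ofReal x * 2⁻¹ :=
      fun x => by
        rw [setLIntegral_congr_fun measurableSet_Ioo fun u hu => ENNReal.ofReal_mul' hu.1.le,
          lintegral_const_mul _ ENNReal.measurable_ofReal, setLIntegral_Ioo_ofReal_id]
    simp_rw [hL, mul_comm (U _ _), lintegral_comp_stick_succ hUmeas hLU hUunif hL0 hL hmeas, hhalf]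
    rw [lintegral_mul_const _ (measurable_stick hL0 hL fun i _ => hUmeas i).ennreal_ofReal, ih,
      pow_succ, mul_assoc]

theorem tendsto_lintegral_comp_stick_zero (hUmeas : ∀ n, Measurable (U n))
    (hLU : ∀ n, IndepFun (L n) (U (n + 1)) μ)
    (hUunif : ∀ n, μ.map (U n) = volume.restrict (Ioo 0 1))
    (hL0 : ∀ ω, L 0 ω = T) (hL : ∀ n ω, L (n + 1) ω = U (n + 1) ω * L n ω)
    {h : ℝ → ℝ≥0∞} {a : ℝ≥0∞} (ha : a ≠ ∞) (hh : ∀ x, h x ≤ a * ENNReal.ofReal x) :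
    Tendsto (fun n => ∫⁻ ω, h (L n ω) ∂μ) atTop (𝓝 0) := by
  have hbound : ∀ n, ∫⁻ ω, h (L n ω) ∂μ ≤ a * ENNReal.ofReal T * 2⁻¹ ^ n := fun n =>
    calc ∫⁻ ω, h (L n ω) ∂μ ≤ ∫⁻ ω, a * ENNReal.ofReal (L n ω) ∂μ := lintegral_mono fun _ => hh _
      _ = a * ENNReal.ofReal T * 2⁻¹ ^ n := by
        rw [lintegral_const_mul _ (measurable_stick hL0 hL fun i _ => hUmeas i).ennreal_ofReal,
          lintegral_ofReal_stick hUmeas hLU hUunif hL0 hL, mul_assoc]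
  refine tendsto_of_tendsto_of_tendsto_of_le_of_le tendsto_const_nhds ?_ (fun _ => zero_le) hbound
  simpa using ENNReal.Tendsto.const_mul (ENNReal.tendsto_pow_atTop_nhds_zero_of_lt_one
    (by norm_num)) (Or.inr (ENNReal.mul_ne_top ha ENNReal.ofReal_ne_top))

theorem lintegral_piece_add_lintegral_logPrimitive_succ (hT : 0 < T)
    (hUmeas : ∀ n, Measurable (U n)) (hLU : ∀ n, IndepFun (L n) (U (n + 1)) μ)
    (hUunif : ∀ n, μ.map (U n) = volume.restrict (Ioo 0 1))
    (hL0 : ∀ ω, L 0 ω = T) (hL : ∀ n ω, L (n + 1) ω = U (n + 1) ω * L n ω)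
    {k : ℝ → ℝ≥0∞} (hk : Measurable k) (n : ℕ) :
    ∫⁻ ω, k (L n ω * (1 - U (n + 1) ω)) ∂μ + ∫⁻ ω, logPrimitive k (L (n + 1) ω) ∂μ
      = ∫⁻ ω, logPrimitive k (L n ω) ∂μ := by
  have hLpos := ae_stick_pos hT hL0 hL
    ((ae_forall_mem_of_map_eq_restrict hUmeas measurableSet_Ioo hUunif).mono fun _ h n => (h n).1)
  have hpiece : Measurable (Function.uncurry fun x u : ℝ => k (x * (1 - u))) := by fun_prop
  have hrest : Measurable (Function.uncurry fun x u : ℝ => logPrimitive k (x * u)) :=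
    (monotone_logPrimitive k).measurable.comp (by fun_prop)
  simp_rw [hL, mul_comm (U _ _)]
  rw [lintegral_comp_stick_succ hUmeas hLU hUunif hL0 hL hpiece n,
    lintegral_comp_stick_succ hUmeas hLU hUunif hL0 hL hrest n,
    ← lintegral_add_left (f := fun ω => ∫⁻ u in Ioo 0 1, k (L n ω * (1 - u)))
      (hpiece.lintegral_prod_right.comp (measurable_stick hL0 hL fun i _ => hUmeas i))]
  refine lintegral_congr_ae ?_
  filter_upwards [hLpos] with ω hω
  exact logPrimitive_renewal hk (hω n)

theorem tsum_lintegral_stick_eq_logPrimitive_of_vanishing (hT : 0 < T)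
    (hUmeas : ∀ n, Measurable (U n)) (hLU : ∀ n, IndepFun (L n) (U (n + 1)) μ)
    (hUunif : ∀ n, μ.map (U n) = volume.restrict (Ioo 0 1))
    (hL0 : ∀ ω, L 0 ω = T) (hL : ∀ n ω, L (n + 1) ω = U (n + 1) ω * L n ω)
    {k : ℝ → ℝ≥0∞} (hk : Measurable k) {c : ℝ≥0∞} (hc : c ≠ ∞) (hkc : ∀ t, k t ≤ c)
    {ε : ℝ} (hε : 0 < ε) (hk0 : ∀ t ≤ ε, k t = 0) :
    ∑' n, ∫⁻ ω, k (L n ω * (1 - U (n + 1) ω)) ∂μ = logPrimitive k T :=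
  (ENNReal.tsum_eq_of_add_succ_eq
    (lintegral_piece_add_lintegral_logPrimitive_succ hT hUmeas hLU hUunif hL0 hL hk)
    (tendsto_lintegral_comp_stick_zero hUmeas hLU hUunif hL0 hL
      (ENNReal.div_ne_top hc (by simpa using hε)) (logPrimitive_le hkc hk0))).trans
    (by simp [hL0])

theorem tsum_lintegral_stick_eq_logPrimitive (hT : 0 < T)
    (hUmeas : ∀ n, Measurable (U n)) (hLU : ∀ n, IndepFun (L n) (U (n + 1)) μ)
    (hUunif : ∀ n, μ.map (U n) = volume.restrict (Ioo 0 1))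
    (hL0 : ∀ ω, L 0 ω = T) (hL : ∀ n ω, L (n + 1) ω = U (n + 1) ω * L n ω)
    {g : ℝ → ℝ≥0∞} (hg : Measurable g) {c : ℝ≥0∞} (hc : c ≠ ∞) (hgc : ∀ t, g t ≤ c) :
    ∑' n, ∫⁻ ω, g (L n ω * (1 - U (n + 1) ω)) ∂μ = logPrimitive g T := by
  set k : ℕ → ℝ → ℝ≥0∞ := fun j => (Ioi (1 / (j + 1 : ℝ))).indicator g
  have hkmeas : ∀ j, Measurable (k j) := fun j => hg.indicator measurableSet_Ioi
  have hkmono : ∀ t, Monotone (k · t) := fun t i j hij =>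
    indicator_le_indicator_of_subset (Ioi_subset_Ioi (Nat.one_div_le_one_div hij))
      (fun _ => zero_le) t
  have hksup : ∀ t, 0 < t → ⨆ j, k j t = g t := fun t ht => by
    obtain ⟨j, hj⟩ := exists_nat_one_div_lt ht
    exact le_antisymm (iSup_le fun j => indicator_le_self _ _ t)
      (le_iSup_of_le j (indicator_of_mem (show t ∈ Ioi _ from hj) g).ge)
  have hU := ae_forall_mem_of_map_eq_restrict hUmeas measurableSet_Ioo hUunif
  have hLpos := ae_stick_pos hT hL0 hL (hU.mono fun _ h n => (h n).1)
  have hLmeas : ∀ n, Measurable (L n) := fun n => measurable_stick hL0 hL fun i _ => hUmeas i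
  calc ∑' n, ∫⁻ ω, g (L n ω * (1 - U (n + 1) ω)) ∂μ
      = ∑' n, ⨆ j, ∫⁻ ω, k j (L n ω * (1 - U (n + 1) ω)) ∂μ := by
        refine tsum_congr fun n => ?_
        rw [← lintegral_iSup (f := fun j ω => k j (L n ω * (1 - U (n + 1) ω)))
          (fun j => (hkmeas j).comp (by fun_prop)) fun i j hij ω => hkmono _ hij]
        refine lintegral_congr_ae ?_
        filter_upwards [hU, hLpos] with ω hUω hLω
        exact (hksup _ (mul_pos (hLω n) (sub_pos.2 (hUω _).2))).symm
    _ = ⨆ j, ∑' n, ∫⁻ ω, k j (L n ω * (1 - U (n + 1) ω)) ∂μ :=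
        ENNReal.tsum_iSup_of_monotone fun n i j hij => lintegral_mono fun ω => hkmono _ hij
    _ = ⨆ j, logPrimitive (k j) T := by
        refine iSup_congr fun j => tsum_lintegral_stick_eq_logPrimitive_of_vanishing hT hUmeas hLU
          hUunif hL0 hL (hkmeas j) hc (fun t => (indicator_le_self _ _ t).trans (hgc t))
          (by positivity) fun t ht => indicator_of_notMem (not_lt.2 ht) g
    _ = logPrimitive g T := by
        unfold logPrimitive
        rw [← lintegral_iSup (f := fun j t => k j t / ENNReal.ofReal t)
          (fun j => (hkmeas j).div ENNReal.measurable_ofReal)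
          fun i j hij t => ENNReal.div_le_div_right (hkmono t hij) _]
        refine setLIntegral_congr_fun measurableSet_Ioc fun t ht => ?_
        rw [← ENNReal.iSup_div, hksup t ht.1]

end StickBreaking

/-- Let `φ : [0,∞)×[0,1] → [0,∞)` be bounded measurable, `(λ_n)` a uniform
stick-breaking process on `[0,T]` and `(V_n)` an independent i.i.d. `U(0,1)` sequence.
Then `E[Σ_{n≥1} φ(λ_n, V_n)] = ∫_0^T φ̄(t)/t dt` where `φ̄(t) = ∫_0^1 φ(t,u) du`. -/
theorem stmt_7 {Ω : Type*} [MeasurableSpace Ω] (μ : Measure Ω) [IsProbabilityMeasure μ]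
    (T : ℝ) (hT : 0 < T)
    (U V : ℕ → Ω → ℝ)
    (hUmeas : ∀ n, Measurable (U n)) (hVmeas : ∀ n, Measurable (V n))
    (hindep : iIndepFun (Sum.elim U V) μ)
    (hUunif : ∀ n, μ.map (U n) = volume.restrict (Set.Ioo (0 : ℝ) 1))
    (hVunif : ∀ n, μ.map (V n) = volume.restrict (Set.Ioo (0 : ℝ) 1))
    (L : ℕ → Ω → ℝ) (hL0 : ∀ ω, L 0 ω = T)
    (hL : ∀ n ω, L (n + 1) ω = U (n + 1) ω * L n ω)
    (lam : ℕ → Ω → ℝ) (hlam : ∀ n ω, lam (n + 1) ω = L n ω - L (n + 1) ω)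
    (φ : ℝ → ℝ → ℝ) (hφmeas : Measurable (Function.uncurry φ))
    (hφnn : ∀ t u : ℝ, 0 ≤ φ t u) (hφbdd : ∃ C : ℝ, ∀ t u : ℝ, φ t u ≤ C) :
    ∫⁻ ω, ∑' n : ℕ, ENNReal.ofReal (φ (lam (n + 1) ω) (V (n + 1) ω)) ∂μ
      = ∫⁻ t in Set.Ioc (0 : ℝ) T,
          ENNReal.ofReal (∫ u in Set.Ioo (0 : ℝ) 1, φ t u) / ENNReal.ofReal t := by
  obtain ⟨C, hC⟩ := hφbdd
  set g : ℝ → ℝ≥0∞ := fun t => ∫⁻ u in Ioo 0 1, ENNReal.ofReal (φ t u)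
  have hψ : Measurable (Function.uncurry fun t u => ENNReal.ofReal (φ t u)) :=
    ENNReal.measurable_ofReal.comp hφmeas
  have hgC : ∀ t, g t ≤ ENNReal.ofReal C := fun t =>
    (lintegral_mono fun u => ENNReal.ofReal_le_ofReal (hC t u)).trans (by simp)
  have hpiece : ∀ n ω, lam (n + 1) ω = L n ω * (1 - U (n + 1) ω) := fun n ω => by
    rw [hlam, hL]; ring
  have hLmeas : ∀ n, Measurable (L n) := fun n => measurable_stick hL0 hL fun i _ => hUmeas i
  have hΛmeas : ∀ n, Measurable fun ω => L n ω * (1 - U (n + 1) ω) := by fun_prop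
  calc ∫⁻ ω, ∑' n : ℕ, ENNReal.ofReal (φ (lam (n + 1) ω) (V (n + 1) ω)) ∂μ
      = ∑' n, ∫⁻ ω, ENNReal.ofReal (φ (L n ω * (1 - U (n + 1) ω)) (V (n + 1) ω)) ∂μ := by
        simp only [hpiece]
        exact lintegral_tsum fun n => (hψ.comp ((hΛmeas n).prodMk (hVmeas _))).aemeasurable
    _ = ∑' n, ∫⁻ ω, g (L n ω * (1 - U (n + 1) ω)) ∂μ := tsum_congr fun n => by
        rw [(indepFun_stick_piece hUmeas hVmeas hindep hL0 hL n).lintegral_comp_eq (hΛmeas n)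
          (hVmeas _) hψ, hVunif]
    _ = logPrimitive g T := tsum_lintegral_stick_eq_logPrimitive hT hUmeas
        (indepFun_stick_succ hUmeas hVmeas hindep hL0 hL) hUunif hL0 hL hψ.lintegral_prod_right
        ENNReal.ofReal_ne_top hgC
    _ = _ := setLIntegral_congr_fun measurableSet_Ioc fun t _ => by
        rw [ofReal_integral_eq_lintegral_ofReal (Integrable.of_bound (f := φ t)
          (hφmeas.comp measurable_prodMk_left).aestronglyMeasurable C (ae_of_all _ fun u => by
            simpa [abs_of_nonneg (hφnn t u)] using hC t u)) (ae_of_all _ (hφnn t))]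
end

section
/- Let (λ_n) be a uniform stick-breaking process on [0,T]. For any measurable f : [0,T] → [0,∞], one has Σ_{n=1}^∞ E[f(λ_n)] = ∫_0^T f(t)/t dt. -/
/-!
Write `Φ(s) = ∫_{(0,s]} f(t)/t dt` (`divIntegral f s`). Given `L_n = s`, the next pieces are
`λ_{n+1} = s(1-U)` and `L_{n+1} = sU` with `U` uniform and independent of `L_n`, and Fubini gives
`Φ(s) = E[f(s(1-U))] + E[Φ(sU)]`. Telescoping, `Φ(T) = Σ_{n<N} E[f(λ_{n+1})] + E[Φ(L_N)]`, which
already gives `≤`. If `f(t)/t ≤ c`, the remainder is at most `c E[L_N] = c T 2^{-N} → 0`; the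
general case follows by monotone convergence applied to `min(f(t), k t)`.
-/

open MeasureTheory ProbabilityTheory Real Set ENNReal

noncomputable def divIntegral (f : ℝ → ℝ≥0∞) (s : ℝ) : ℝ≥0∞ :=
  ∫⁻ t in Ioc 0 s, f t / ENNReal.ofReal t

lemma monotone_divIntegral (f : ℝ → ℝ≥0∞) : Monotone (divIntegral f) := fun _ _ hab =>
  lintegral_mono_set (Ioc_subset_Ioc_right hab)

lemma measurable_divIntegral (f : ℝ → ℝ≥0∞) : Measurable (divIntegral f) :=
  (monotone_divIntegral f).measurable

section divIntegral

variable {f : ℝ → ℝ≥0∞}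

lemma divIntegral_le_mul_ofReal {c : ℝ≥0∞} (hc : ∀ t, 0 < t → f t / ENNReal.ofReal t ≤ c)
    (s : ℝ) : divIntegral f s ≤ c * ENNReal.ofReal s :=
  calc divIntegral f s ≤ ∫⁻ _ in Ioc 0 s, c :=
        setLIntegral_mono measurable_const fun t ht => hc t ht.1
    _ = c * ENNReal.ofReal s := by rw [setLIntegral_const, Real.volume_Ioc, sub_zero]

lemma setLIntegral_Ioo_comp_mul_one_sub {s : ℝ} (hs : 0 < s) :
    ∫⁻ u in Ioo 0 1, f (s * (1 - u)) = (ENNReal.ofReal s)⁻¹ * ∫⁻ t in Ioc 0 s, f t := by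
  have himage : (fun u => s * (1 - u)) '' Ioo 0 1 = Ioo 0 s := by
    rw [show (fun u : ℝ => s * (1 - u)) = (s * ·) ∘ (1 - ·) from rfl, image_comp,
      image_const_sub_Ioo, image_mul_left_Ioo hs]
    norm_num
  have hderiv : ∀ u ∈ Ioo (0 : ℝ) 1,
      HasDerivWithinAt (fun u => s * (1 - u)) (-s) (Ioo 0 1) u := fun u _ => by
    simpa using ((hasDerivAt_id u).const_sub 1).const_mul s |>.hasDerivWithinAt
  have hinj : InjOn (fun u : ℝ => s * (1 - u)) (Ioo 0 1) := fun u _ v _ huv => by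
    simpa [hs.ne'] using huv
  rw [← setLIntegral_congr Ioo_ae_eq_Ioc, ← himage,
    lintegral_image_eq_lintegral_abs_deriv_mul measurableSet_Ioo hderiv hinj, abs_neg,
    abs_of_pos hs, lintegral_const_mul' _ _ ofReal_ne_top, ← mul_assoc,
    ENNReal.inv_mul_cancel (ofReal_pos.2 hs).ne' ofReal_ne_top, one_mul]

lemma setLIntegral_Ioo_divIntegral_mul (hf : Measurable f) {s : ℝ} (hs : 0 < s) :
    ∫⁻ u in Ioo 0 1, divIntegral f (s * u)
      = ∫⁻ t in Ioc 0 s, f t / ENNReal.ofReal t * ENNReal.ofReal (1 - t / s) := by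
  set g : ℝ → ℝ≥0∞ := fun t => f t / ENNReal.ofReal t
  have hg : Measurable g := hf.div ENNReal.measurable_ofReal
  have hinner : ∀ u ∈ Ioo (0 : ℝ) 1,
      divIntegral f (s * u) = ∫⁻ t in Ioc 0 s, (Iic (s * u)).indicator g t := fun u hu => by
    rw [setLIntegral_indicator measurableSet_Iic, Iic_inter_Ioc_of_le (by nlinarith [hu.2]),
      divIntegral]
  have hvol : ∀ t ∈ Ioc 0 s, volume (Ici (t / s) ∩ Ioo 0 1) = ENNReal.ofReal (1 - t / s) :=
    fun t ht => by
      rw [show Ici (t / s) ∩ Ioo 0 1 = Ico (t / s) 1 by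
        ext u
        simp only [mem_inter_iff, mem_Ici, mem_Ioo, mem_Ico]
        constructor
        · rintro ⟨h, -, h1⟩; exact ⟨h, h1⟩
        · rintro ⟨h, h1⟩; exact ⟨h, (div_pos ht.1 hs).trans_le h, h1⟩, Real.volume_Ico]
  have hswap : ∀ t u, (Iic (s * u)).indicator g t = (Ici (t / s)).indicator (fun _ => g t) u :=
    fun t u => by simp only [indicator, mem_Iic, mem_Ici, div_le_iff₀' hs]
  have hmeas : Measurable (Function.uncurry fun u t => (Iic (s * u)).indicator g t) := by
    simp only [Function.uncurry_def, indicator, mem_Iic]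
    exact Measurable.ite (measurableSet_le measurable_snd (measurable_fst.const_mul s))
      (hg.comp measurable_snd) measurable_const
  calc ∫⁻ u in Ioo 0 1, divIntegral f (s * u)
      = ∫⁻ u in Ioo 0 1, ∫⁻ t in Ioc 0 s, (Iic (s * u)).indicator g t :=
        setLIntegral_congr_fun measurableSet_Ioo hinner
    _ = ∫⁻ t in Ioc 0 s, ∫⁻ u in Ioo 0 1, (Ici (t / s)).indicator (fun _ => g t) u := by
        simp only [← hswap]
        exact lintegral_lintegral_swap hmeas.aemeasurable
    _ = ∫⁻ t in Ioc 0 s, g t * ENNReal.ofReal (1 - t / s) := by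
        refine setLIntegral_congr_fun measurableSet_Ioc fun t ht => ?_
        rw [lintegral_indicator_const measurableSet_Ici,
          Measure.restrict_apply measurableSet_Ici, hvol t ht]

lemma setLIntegral_Ioo_add_divIntegral_mul (hf : Measurable f) {s : ℝ} (hs : 0 < s) :
    ∫⁻ u in Ioo 0 1, (f (s * (1 - u)) + divIntegral f (s * u)) = divIntegral f s := by
  have hpoint : ∀ t ∈ Ioc 0 s, (ENNReal.ofReal s)⁻¹ * f t
      + f t / ENNReal.ofReal t * ENNReal.ofReal (1 - t / s) = f t / ENNReal.ofReal t := by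
    intro t ht
    have hts : (ENNReal.ofReal s)⁻¹ * f t = f t / ENNReal.ofReal t * ENNReal.ofReal (t / s) := by
      rw [ENNReal.ofReal_div_of_pos hs, div_eq_mul_inv, div_eq_mul_inv, mul_assoc,
        ← mul_assoc _ (ENNReal.ofReal t), ENNReal.inv_mul_cancel (ofReal_pos.2 ht.1).ne'
          ofReal_ne_top, one_mul, mul_comm]
    rw [hts, ← mul_add, ← ENNReal.ofReal_add (div_nonneg ht.1.le hs.le)
      (sub_nonneg.2 ((div_le_one hs).2 ht.2)), add_sub_cancel, ENNReal.ofReal_one, mul_one]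
  rw [lintegral_add_left (f := fun u => f (s * (1 - u))) (by fun_prop),
    setLIntegral_Ioo_comp_mul_one_sub hs, setLIntegral_Ioo_divIntegral_mul hf hs,
    ← lintegral_const_mul' _ _ (ENNReal.inv_ne_top.2 (ofReal_pos.2 hs).ne'),
    ← lintegral_add_left (hf.const_mul _)]
  exact setLIntegral_congr_fun measurableSet_Ioc hpoint

lemma divIntegral_le_of_forall_divIntegral_le (hf : Measurable f) {s : ℝ} {a : ℝ≥0∞}
    (h : ∀ g : ℝ → ℝ≥0∞, Measurable g → g ≤ f → ∀ c ≠ ∞,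
      (∀ t, 0 < t → g t / ENNReal.ofReal t ≤ c) → divIntegral g s ≤ a) :
    divIntegral f s ≤ a := by
  set g : ℕ → ℝ → ℝ≥0∞ := fun k t => min (f t) (k * ENNReal.ofReal t)
  have hg : ∀ k, Measurable (g k) := fun k => hf.min (by fun_prop)
  have hmono : ∀ t, Monotone fun k => g k t / ENNReal.ofReal t := fun t i j hij => by
    simp only [g]
    gcongr
  have hlim : ∀ t, 0 < t → Filter.Tendsto (fun k => g k t) Filter.atTop (nhds (f t)) := by
    intro t ht
    have htop : Filter.Tendsto (fun k : ℕ => (k : ℝ≥0∞) * ENNReal.ofReal t) Filter.atTop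
        (nhds ∞) := by
      simpa [top_mul (ofReal_pos.2 ht).ne'] using
        ENNReal.Tendsto.mul_const ENNReal.tendsto_nat_nhds_top (Or.inr (ofReal_ne_top (r := t)))
    simpa using tendsto_const_nhds.min htop
  refine le_of_tendsto' (lintegral_tendsto_of_tendsto_of_monotone
    (fun k => ((hg k).div ENNReal.measurable_ofReal).aemeasurable)
    (Filter.Eventually.of_forall hmono) ?_) fun k => h (g k) (hg k) (fun t => min_le_left _ _) k
      (natCast_ne_top k) fun t _ => ENNReal.div_le_of_le_mul (min_le_right _ _)
  filter_upwards [ae_restrict_mem measurableSet_Ioc] with t ht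
  exact ENNReal.Tendsto.div_const (hlim t ht.1) (Or.inr (ofReal_pos.2 ht.1).ne')

end divIntegral

lemma ProbabilityTheory.IndepFun.lintegral_comp_eq_lintegral_lintegral_map
    {Ω α β : Type*} [MeasurableSpace Ω] [MeasurableSpace α] [MeasurableSpace β]
    {μ : Measure Ω} [IsFiniteMeasure μ] {X : Ω → α} {Y : Ω → β} (hXY : IndepFun X Y μ)
    (hX : Measurable X) (hY : Measurable Y) {g : α × β → ℝ≥0∞} (hg : Measurable g) :
    ∫⁻ ω, g (X ω, Y ω) ∂μ = ∫⁻ ω, ∫⁻ y, g (X ω, y) ∂(μ.map Y) ∂μ := by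
  rw [← lintegral_map hg (hX.prodMk hY),
    (indepFun_iff_map_prod_eq_prod_map_map hX.aemeasurable hY.aemeasurable).mp hXY,
    lintegral_prod _ hg.aemeasurable, lintegral_map hg.lintegral_prod_right' hX]

lemma setLIntegral_Ioo_ofReal_mul (s : ℝ) :
    ∫⁻ u in Ioo 0 1, ENNReal.ofReal (s * u) = ENNReal.ofReal s * 2⁻¹ := by
  have hid : ∫⁻ u in Ioo (0 : ℝ) 1, ENNReal.ofReal u = 2⁻¹ := by
    rw [← ofReal_integral_eq_lintegral_ofReal, ← integral_Ioc_eq_integral_Ioo,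
      ← intervalIntegral.integral_of_le zero_le_one, integral_id]
    · rw [show ((1 : ℝ) ^ 2 - 0 ^ 2) / 2 = 2⁻¹ by norm_num, ofReal_inv_of_pos two_pos, ofReal_ofNat]
    · exact continuous_id.integrableOn_Icc.mono_set Ioo_subset_Icc_self
    · exact (ae_restrict_iff' measurableSet_Ioo).2 (Filter.Eventually.of_forall fun u hu => hu.1.le)
  rw [setLIntegral_congr_fun measurableSet_Ioo fun u hu => ENNReal.ofReal_mul' hu.1.le,
    lintegral_const_mul _ ENNReal.measurable_ofReal, hid]

section StickBreaking

variable {Ω : Type*} {T : ℝ} {U L : ℕ → Ω → ℝ}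

lemma stickLength_eq_mul_prod (hL0 : ∀ ω, L 0 ω = T)
    (hL : ∀ n ω, L (n + 1) ω = U (n + 1) ω * L n ω) (n : ℕ) :
    L n = (T * ·) ∘ ∏ i ∈ Finset.Icc 1 n, U i := by
  induction n with
  | zero => funext ω; simp [hL0]
  | succ n ih =>
    funext ω
    rw [hL, ih, Finset.prod_Icc_succ_top (Nat.le_add_left 1 n)]
    simp only [Function.comp_apply, Finset.prod_apply, Pi.mul_apply]
    ring

variable [MeasurableSpace Ω] {μ : Measure Ω}

lemma measurable_stickLength (hUmeas : ∀ n, Measurable (U n)) (hL0 : ∀ ω, L 0 ω = T)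
    (hL : ∀ n ω, L (n + 1) ω = U (n + 1) ω * L n ω) (n : ℕ) : Measurable (L n) := by
  induction n with
  | zero => simp only [funext hL0, measurable_const]
  | succ n ih =>
    rw [show L (n + 1) = U (n + 1) * L n from funext (hL n)]
    exact (hUmeas (n + 1)).mul ih

lemma indepFun_stickLength (hUmeas : ∀ n, Measurable (U n)) (hUindep : iIndepFun U μ)
    (hL0 : ∀ ω, L 0 ω = T) (hL : ∀ n ω, L (n + 1) ω = U (n + 1) ω * L n ω) (n : ℕ) :
    IndepFun (L n) (U (n + 1)) μ := by
  rw [stickLength_eq_mul_prod hL0 hL n]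
  exact (hUindep.indepFun_finsetProd_of_notMem hUmeas (by simp)).comp
    (measurable_const_mul T) measurable_id

lemma ae_mem_Ioo_of_map_eq (hUmeas : ∀ n, Measurable (U n))
    (hUunif : ∀ n, μ.map (U n) = volume.restrict (Ioo (0 : ℝ) 1)) :
    ∀ᵐ ω ∂μ, ∀ n, U n ω ∈ Ioo 0 1 := by
  refine ae_all_iff.2 fun n => ?_
  rw [← ae_map_iff (p := (· ∈ Ioo (0 : ℝ) 1)) (hUmeas n).aemeasurable measurableSet_Ioo, hUunif]
  exact ae_restrict_mem measurableSet_Ioo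

lemma ae_pos_stickLength (hT : 0 < T) (hUmeas : ∀ n, Measurable (U n))
    (hUunif : ∀ n, μ.map (U n) = volume.restrict (Ioo (0 : ℝ) 1)) (hL0 : ∀ ω, L 0 ω = T)
    (hL : ∀ n ω, L (n + 1) ω = U (n + 1) ω * L n ω) : ∀ᵐ ω ∂μ, ∀ n, 0 < L n ω := by
  filter_upwards [ae_mem_Ioo_of_map_eq hUmeas hUunif] with ω hω n
  induction n with
  | zero => rwa [hL0]
  | succ n ih => rw [hL]; exact mul_pos (hω _).1 ih

variable [IsProbabilityMeasure μ] {lam : ℕ → Ω → ℝ} {f : ℝ → ℝ≥0∞}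

lemma lintegral_divIntegral_stickLength_eq_add (hT : 0 < T) (hUmeas : ∀ n, Measurable (U n))
    (hUindep : iIndepFun U μ) (hUunif : ∀ n, μ.map (U n) = volume.restrict (Ioo (0 : ℝ) 1))
    (hL0 : ∀ ω, L 0 ω = T) (hL : ∀ n ω, L (n + 1) ω = U (n + 1) ω * L n ω)
    (hlam : ∀ n ω, lam (n + 1) ω = L n ω - L (n + 1) ω) (hf : Measurable f) (n : ℕ) :
    ∫⁻ ω, divIntegral f (L n ω) ∂μ
      = ∫⁻ ω, f (lam (n + 1) ω) ∂μ + ∫⁻ ω, divIntegral f (L (n + 1) ω) ∂μ := by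
  set g : ℝ × ℝ → ℝ≥0∞ := fun p => f (p.1 * (1 - p.2)) + divIntegral f (p.1 * p.2)
  have hg : Measurable g := by
    have := measurable_divIntegral f
    fun_prop
  have hLmeas := measurable_stickLength hUmeas hL0 hL
  calc ∫⁻ ω, divIntegral f (L n ω) ∂μ
      = ∫⁻ ω, (∫⁻ u in Ioo 0 1, g (L n ω, u)) ∂μ := by
        refine lintegral_congr_ae ?_
        filter_upwards [ae_pos_stickLength hT hUmeas hUunif hL0 hL] with ω hω
        exact (setLIntegral_Ioo_add_divIntegral_mul hf (hω n)).symm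
    _ = ∫⁻ ω, g (L n ω, U (n + 1) ω) ∂μ := by
        rw [(indepFun_stickLength hUmeas hUindep hL0 hL n).lintegral_comp_eq_lintegral_lintegral_map
          (hLmeas n) (hUmeas _) hg, hUunif]
    _ = ∫⁻ ω, f (lam (n + 1) ω) ∂μ + ∫⁻ ω, divIntegral f (L (n + 1) ω) ∂μ := by
        have hΦL : Measurable fun ω => divIntegral f (L (n + 1) ω) :=
          (measurable_divIntegral f).comp (hLmeas (n + 1))
        rw [← lintegral_add_right _ hΦL]
        refine lintegral_congr fun ω => ?_
        simp only [g, hlam, hL]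
        ring_nf

lemma divIntegral_eq_sum_add_lintegral (hT : 0 < T) (hUmeas : ∀ n, Measurable (U n))
    (hUindep : iIndepFun U μ) (hUunif : ∀ n, μ.map (U n) = volume.restrict (Ioo (0 : ℝ) 1))
    (hL0 : ∀ ω, L 0 ω = T) (hL : ∀ n ω, L (n + 1) ω = U (n + 1) ω * L n ω)
    (hlam : ∀ n ω, lam (n + 1) ω = L n ω - L (n + 1) ω) (hf : Measurable f) (N : ℕ) :
    divIntegral f T
      = ∑ n ∈ Finset.range N, ∫⁻ ω, f (lam (n + 1) ω) ∂μ + ∫⁻ ω, divIntegral f (L N ω) ∂μ := by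
  induction N with
  | zero => simp [hL0]
  | succ N ih =>
    rw [ih, lintegral_divIntegral_stickLength_eq_add hT hUmeas hUindep hUunif hL0 hL hlam hf,
      Finset.sum_range_succ, add_assoc]

lemma lintegral_ofReal_stickLength (hUmeas : ∀ n, Measurable (U n))
    (hUindep : iIndepFun U μ) (hUunif : ∀ n, μ.map (U n) = volume.restrict (Ioo (0 : ℝ) 1))
    (hL0 : ∀ ω, L 0 ω = T) (hL : ∀ n ω, L (n + 1) ω = U (n + 1) ω * L n ω) (N : ℕ) :
    ∫⁻ ω, ENNReal.ofReal (L N ω) ∂μ = ENNReal.ofReal T * 2⁻¹ ^ N := by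
  induction N with
  | zero => simp [hL0]
  | succ N ih =>
    have hLmeas := measurable_stickLength hUmeas hL0 hL
    calc ∫⁻ ω, ENNReal.ofReal (L (N + 1) ω) ∂μ
        = ∫⁻ ω, ENNReal.ofReal (L N ω * U (N + 1) ω) ∂μ := by simp only [hL, mul_comm]
      _ = ∫⁻ ω, ENNReal.ofReal (L N ω) * 2⁻¹ ∂μ := by
        rw [(indepFun_stickLength hUmeas hUindep hL0 hL N).lintegral_comp_eq_lintegral_lintegral_map
          (g := fun p => ENNReal.ofReal (p.1 * p.2)) (hLmeas N) (hUmeas _) (by fun_prop), hUunif]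
        simp only [setLIntegral_Ioo_ofReal_mul]
      _ = ENNReal.ofReal T * 2⁻¹ ^ (N + 1) := by
        rw [lintegral_mul_const _ (hLmeas N).ennreal_ofReal, ih, pow_succ, mul_assoc]

lemma tsum_lintegral_eq_divIntegral_of_div_le (hT : 0 < T) (hUmeas : ∀ n, Measurable (U n))
    (hUindep : iIndepFun U μ) (hUunif : ∀ n, μ.map (U n) = volume.restrict (Ioo (0 : ℝ) 1))
    (hL0 : ∀ ω, L 0 ω = T) (hL : ∀ n ω, L (n + 1) ω = U (n + 1) ω * L n ω)
    (hlam : ∀ n ω, lam (n + 1) ω = L n ω - L (n + 1) ω) (hf : Measurable f) {c : ℝ≥0∞}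
    (hc : c ≠ ∞) (hfc : ∀ t, 0 < t → f t / ENNReal.ofReal t ≤ c) :
    ∑' n, ∫⁻ ω, f (lam (n + 1) ω) ∂μ = divIntegral f T := by
  have hbound : ∀ N, ∫⁻ ω, divIntegral f (L N ω) ∂μ ≤ c * (ENNReal.ofReal T * 2⁻¹ ^ N) :=
    fun N => calc ∫⁻ ω, divIntegral f (L N ω) ∂μ ≤ ∫⁻ ω, c * ENNReal.ofReal (L N ω) ∂μ :=
          lintegral_mono fun ω => divIntegral_le_mul_ofReal hfc _
      _ = c * (ENNReal.ofReal T * 2⁻¹ ^ N) := by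
          rw [lintegral_const_mul' _ _ hc,
            lintegral_ofReal_stickLength hUmeas hUindep hUunif hL0 hL]
  have hgeom : Filter.Tendsto (fun N : ℕ => c * (ENNReal.ofReal T * 2⁻¹ ^ N)) Filter.atTop
      (nhds 0) := by
    simpa using ENNReal.Tendsto.const_mul (ENNReal.Tendsto.const_mul
      (ENNReal.tendsto_pow_atTop_nhds_zero_of_lt_one (by norm_num)) (Or.inr ofReal_ne_top))
      (Or.inr hc)
  have hrem : Filter.Tendsto (fun N => ∫⁻ ω, divIntegral f (L N ω) ∂μ) Filter.atTop (nhds 0) :=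
    tendsto_of_tendsto_of_tendsto_of_le_of_le tendsto_const_nhds hgeom (fun _ => zero_le)
      hbound
  refine tendsto_nhds_unique (by simpa using (ENNReal.tendsto_nat_tsum _).add hrem) ?_
  simp only [← divIntegral_eq_sum_add_lintegral hT hUmeas hUindep hUunif hL0 hL hlam hf]
  exact tendsto_const_nhds

end StickBreaking

/-- For a uniform stick-breaking process `(λ_n)` on `[0,T]` (`L_0 = T`,
`L_n = U_n·L_{n-1}`, `λ_n = L_{n-1} - L_n` with `(U_n)` i.i.d. `U(0,1)`) and any
measurable `f : ℝ → [0,∞]`, `Σ_{n≥1} E[f(λ_n)] = ∫_0^T f(t)/t dt`. -/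
theorem stmt_8 {Ω : Type*} [MeasurableSpace Ω] (μ : Measure Ω) [IsProbabilityMeasure μ]
    (T : ℝ) (hT : 0 < T)
    (U : ℕ → Ω → ℝ) (hUmeas : ∀ n, Measurable (U n))
    (hUindep : iIndepFun U μ)
    (hUunif : ∀ n, μ.map (U n) = volume.restrict (Set.Ioo (0 : ℝ) 1))
    (L : ℕ → Ω → ℝ) (hL0 : ∀ ω, L 0 ω = T)
    (hL : ∀ n ω, L (n + 1) ω = U (n + 1) ω * L n ω)
    (lam : ℕ → Ω → ℝ) (hlam : ∀ n ω, lam (n + 1) ω = L n ω - L (n + 1) ω)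
    (f : ℝ → ℝ≥0∞) (hf : Measurable f) :
    ∑' n : ℕ, ∫⁻ ω, f (lam (n + 1) ω) ∂μ
      = ∫⁻ t in Set.Ioc (0 : ℝ) T, f t / ENNReal.ofReal t := by
  refine le_antisymm (ENNReal.tsum_le_of_sum_range_le fun N => ?_) ?_
  · exact le_self_add.trans_eq
      (divIntegral_eq_sum_add_lintegral hT hUmeas hUindep hUunif hL0 hL hlam hf N).symm
  · refine divIntegral_le_of_forall_divIntegral_le hf fun g hg hgf c hc hgc => ?_
    rw [← tsum_lintegral_eq_divIntegral_of_div_le hT hUmeas hUindep hUunif hL0 hL hlam hg hc hgc]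
    exact ENNReal.tsum_le_tsum fun n => lintegral_mono fun ω => hgf _
end

section
/- Let ν be a Lévy measure supported in (-1,1) with ∫ x² ν(dx) < ∞, and set Im ψ(u) = ∫ (sin(u x) - u x) ν(dx). Then for |u| > 1, |Im ψ(u) + u γ̄(1/|u|)| ≤ (1/3) u² σ̄²(1/|u|) + ν̄(1/|u|), where γ̄(x) = ∫_{(-1,1)\(-x,x)} y ν(dy), σ̄²(x) = ∫_{(-x,x)} y² ν(dy), ν̄(x) = ν((-1,1)\(-x,x)). -/
/-!
Split the Lévy measure at `1/|u|`: adding `u γ̄(1/|u|)` cancels the compensator `u x` on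
`1/|u| ≤ |x| < 1`, so `Im ψ(u) + u γ̄(1/|u|)` is `∫_{|x| < 1/|u|} (sin(ux) - ux) dν` plus
`∫_{1/|u| ≤ |x| < 1} sin(ux) dν`. The first integrand is at most `(ux)²/3` by the Taylor bound
`|sin y - y| ≤ |y|³/6`, the second at most `1`; the second moment makes `ν` finite away from `0`
(Chebyshev), so every integral involved is finite.
-/

open MeasureTheory Real Set ENNReal

lemma abs_sin_sub_le_sq_div_three {y : ℝ} (hy : |y| ≤ 1) : |sin y - y| ≤ y ^ 2 / 3 := by
  have hcube : |y| ^ 3 ≤ |y| ^ 2 := pow_le_pow_of_le_one (abs_nonneg y) hy (by norm_num)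
  calc |sin y - y| = |y - sin y| := abs_sub_comm _ _
    _ ≤ |y| ^ 3 / 6 := abs_sub_sin_le y
    _ ≤ y ^ 2 / 3 := by rw [← sq_abs y]; nlinarith [sq_nonneg |y|]

lemma abs_sin_mul_sub_mul_le {u c x : ℝ} (huc : |u| * c ≤ 1) (hx : x ∈ Ioo (-c) c) :
    |sin (u * x) - u * x| ≤ 1 / 3 * u ^ 2 * x ^ 2 := by
  have hux : |u * x| ≤ 1 := by
    rw [abs_mul]
    exact (mul_le_mul_of_nonneg_left (abs_lt.mpr hx).le (abs_nonneg u)).trans huc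
  calc |sin (u * x) - u * x| ≤ (u * x) ^ 2 / 3 := abs_sin_sub_le_sq_div_three hux
    _ = 1 / 3 * u ^ 2 * x ^ 2 := by ring

section SecondMoment

variable {ν : Measure ℝ} (hν2 : ∫⁻ x, ENNReal.ofReal (x ^ 2) ∂ν < ∞)
include hν2

lemma integrable_sq_of_lintegral_lt_top : Integrable (fun x => x ^ 2) ν :=
  ⟨by fun_prop, (hasFiniteIntegral_iff_ofReal (ae_of_all _ fun x => sq_nonneg x)).mpr hν2⟩

lemma measure_compl_Ioo_lt_top {c : ℝ} (hc : 0 < c) : ν (Ioo (-c) c)ᶜ < ∞ := by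
  have hsub : (Ioo (-c) c)ᶜ ⊆ {x | ENNReal.ofReal (c ^ 2) ≤ ENNReal.ofReal (x ^ 2)} := by
    intro x hx
    have hcx : c ≤ |x| := not_lt.mp fun h => hx (abs_lt.mp h)
    exact ENNReal.ofReal_le_ofReal (by rw [← sq_abs x]; nlinarith)
  have hmarkov := mul_meas_ge_le_lintegral₀ (μ := ν)
    (f := fun x => ENNReal.ofReal (x ^ 2)) (by fun_prop) (ENNReal.ofReal (c ^ 2))
  refine (measure_mono hsub).trans_lt (lt_top_iff_ne_top.mpr fun htop => ?_)
  rw [htop, ENNReal.mul_top (ENNReal.ofReal_pos.mpr (by positivity)).ne'] at hmarkov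
  exact (hmarkov.trans_lt hν2).ne rfl

variable {u c : ℝ} (huc : |u| * c ≤ 1)
include huc

lemma integrableOn_sin_mul_sub_mul :
    IntegrableOn (fun x => sin (u * x) - u * x) (Ioo (-c) c) ν :=
  ((integrable_sq_of_lintegral_lt_top hν2).const_mul (1 / 3 * u ^ 2)).integrableOn.mono'
    (by fun_prop) (ae_restrict_of_forall_mem measurableSet_Ioo fun _ hx =>
      (Real.norm_eq_abs _).trans_le (abs_sin_mul_sub_mul_le huc hx))

lemma abs_setIntegral_sin_mul_sub_mul_le :
    |∫ x in Ioo (-c) c, (sin (u * x) - u * x) ∂ν| ≤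
      1 / 3 * u ^ 2 * ∫ x in Ioo (-c) c, x ^ 2 ∂ν := by
  rw [← integral_const_mul, ← Real.norm_eq_abs]
  exact norm_integral_le_of_norm_le
    ((integrable_sq_of_lintegral_lt_top hν2).const_mul (1 / 3 * u ^ 2)).integrableOn
    (ae_restrict_of_forall_mem measurableSet_Ioo fun _ hx =>
      (Real.norm_eq_abs _).trans_le (abs_sin_mul_sub_mul_le huc hx))

end SecondMoment

lemma abs_setIntegral_sin_mul_le_measure {ν : Measure ℝ} {A : Set ℝ} (hA : ν A < ∞) (u : ℝ) :
    |∫ x in A, sin (u * x) ∂ν| ≤ (ν A).toReal := by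
  simpa [Measure.real] using norm_setIntegral_le_of_norm_le_const (C := 1) hA
    fun x _ => (Real.norm_eq_abs _).trans_le (abs_sin_le_one (u * x))

lemma integral_sin_mul_sub_mul_add_eq {ν : Measure ℝ} {S T : Set ℝ} {u : ℝ}
    (hT : ν Tᶜ = 0) (hS : MeasurableSet S) (hST : S ⊆ T)
    (hfS : IntegrableOn (fun x => sin (u * x) - u * x) S ν) (hA : ν (T \ S) < ∞)
    (hid : IntegrableOn (fun x => x) (T \ S) ν) :
    ∫ x, (sin (u * x) - u * x) ∂ν + u * ∫ x in T \ S, x ∂ν =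
      ∫ x in S, (sin (u * x) - u * x) ∂ν + ∫ x in T \ S, sin (u * x) ∂ν := by
  have hsin : IntegrableOn (fun x => sin (u * x)) (T \ S) ν :=
    Measure.integrableOn_of_bounded hA.ne (by fun_prop) (M := 1)
      (ae_of_all _ fun x => (Real.norm_eq_abs _).trans_le (abs_sin_le_one (u * x)))
  have hfA : IntegrableOn (fun x => sin (u * x) - u * x) (T \ S) ν :=
    hsin.sub (hid.const_mul u)
  have hνT : ∫ x, (sin (u * x) - u * x) ∂ν = ∫ x in T, (sin (u * x) - u * x) ∂ν := by
    rw [Measure.restrict_eq_self_of_ae_mem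
      (compl_compl T ▸ measure_eq_zero_iff_ae_notMem.mp hT)]
  rw [hνT, ← integral_inter_add_sdiff hS ((union_sdiff_cancel hST) ▸ hfS.union hfA),
    inter_eq_right.mpr hST, integral_sub hsin (hid.const_mul u), integral_const_mul]
  ring

theorem stmt_12_general (ν : Measure ℝ)
    (hsupp : ν ((Set.Ioo (-1 : ℝ) 1)ᶜ) = 0)
    (hν2 : ∫⁻ x, ENNReal.ofReal (x^2) ∂ν < ∞)
    (Imψ : ℝ → ℝ)
    (hImψ : ∀ u : ℝ, Imψ u = ∫ x, (Real.sin (u * x) - u * x) ∂ν)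
    (u : ℝ) (hu : 1 < |u|) :
    |Imψ u + u * (∫ y in Set.Ioo (-1 : ℝ) 1 \ Set.Ioo (-(1/|u|)) (1/|u|), y ∂ν)| ≤
      (1/3) * u^2 * (∫ y in Set.Ioo (-(1/|u|)) (1/|u|), y^2 ∂ν) +
      (ν (Set.Ioo (-1 : ℝ) 1 \ Set.Ioo (-(1/|u|)) (1/|u|))).toReal := by
  have hu0 : 0 < |u| := one_pos.trans hu
  have huc : |u| * (1 / |u|) ≤ 1 := (mul_one_div_cancel hu0.ne').le
  have hc1 : 1 / |u| ≤ 1 := ((div_lt_one hu0).mpr hu).le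
  have hA : ν (Ioo (-1) 1 \ Ioo (-(1 / |u|)) (1 / |u|)) < ∞ :=
    (measure_mono (sdiff_subset_compl _ _)).trans_lt
      (measure_compl_Ioo_lt_top hν2 (by positivity))
  have hid : IntegrableOn (fun x => x) (Ioo (-1) 1 \ Ioo (-(1 / |u|)) (1 / |u|)) ν :=
    Measure.integrableOn_of_bounded hA.ne (by fun_prop) (M := 1)
      (ae_restrict_of_forall_mem (measurableSet_Ioo.diff measurableSet_Ioo) fun x hx =>
        (abs_lt.mpr hx.1).le)
  rw [hImψ, integral_sin_mul_sub_mul_add_eq hsupp measurableSet_Ioo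
    (Ioo_subset_Ioo (neg_le_neg hc1) hc1) (integrableOn_sin_mul_sub_mul hν2 huc) hA hid]
  exact (abs_add_le _ _).trans (add_le_add (abs_setIntegral_sin_mul_sub_mul_le hν2 huc)
    (abs_setIntegral_sin_mul_le_measure hA u))

/-- Bound on the imaginary part of the Lévy–Khintchine exponent of a Lévy measure
supported in `(-1,1)` with finite second moment: with
`Im ψ(u) = ∫ (sin(ux) - ux) ν(dx)`, for `|u| > 1`,
`|Im ψ(u) + u·γ̄(1/|u|)| ≤ (1/3)·u²·σ̄²(1/|u|) + ν̄(1/|u|)`, where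
`γ̄(x) = ∫_{(-1,1)∖(-x,x)} y ν(dy)`, `σ̄²(x) = ∫_{(-x,x)} y² ν(dy)` and
`ν̄(x) = ν((-1,1)∖(-x,x))`. -/
theorem stmt_12 (ν : Measure ℝ) (hν0 : ν {0} = 0)
    (hsupp : ν ((Set.Ioo (-1 : ℝ) 1)ᶜ) = 0)
    (hν2 : ∫⁻ x, ENNReal.ofReal (x^2) ∂ν < ∞)
    (Imψ : ℝ → ℝ)
    (hImψ : ∀ u : ℝ, Imψ u = ∫ x, (Real.sin (u * x) - u * x) ∂ν)
    (u : ℝ) (hu : 1 < |u|) :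
    |Imψ u + u * (∫ y in Set.Ioo (-1 : ℝ) 1 \ Set.Ioo (-(1/|u|)) (1/|u|), y ∂ν)| ≤
      (1/3) * u^2 * (∫ y in Set.Ioo (-(1/|u|)) (1/|u|), y^2 ∂ν) +
      (ν (Set.Ioo (-1 : ℝ) 1 \ Set.Ioo (-(1/|u|)) (1/|u|))).toReal :=
  stmt_12_general ν hsupp hν2 Imψ hImψ u hu
end

section
/- Let ν be a measure on (0,1) with ν((0,1)) possibly infinite but ∫_{(0,1)} x ν(dx) possibly infinite, and suppose ν((x,1)) < ∞ for all x ∈ (0,1). If ν has infinite first moment near 0, i.e. ∫_{(0,1)} x ν(dx) = ∞, then (1/u) ∫_{(0,1)} (u x - sin(u x)) ν(dx) ≥ ∫_{(1/u,1)} ν([y,1)) dy for every u > 1, and hence the left-hand side tends to ∞ as u → ∞. -/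
/-! Since `sin ≤ 1`, the integrand satisfies `(u x - sin (u x)) / u ≥ x - 1/u`, and the layer-cake
formula turns `∫ (x - a)⁺ dν` into `∫_a^1 ν[y, 1) dy`; with `a = 1/u` this is the inequality.
As `u → ∞`, `(x - 1/u)⁺ ↑ x`, so by monotone convergence the lower bound tends to
`∫ x dν = ∞`. -/

open MeasureTheory Real Set ENNReal Filter Topology

theorem setLIntegral_Ioi_comp_add_right (F : ℝ → ℝ≥0∞) (a : ℝ) :
    ∫⁻ t in Ioi 0, F (t + a) = ∫⁻ y in Ioi a, F y := by
  rw [← lintegral_indicator measurableSet_Ioi, ← lintegral_indicator measurableSet_Ioi,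
    ← lintegral_add_right_eq_self ((Ioi a).indicator F) a]
  congr 1 with t
  simp [indicator_apply]

theorem lintegral_ofReal_sub_eq_setLIntegral_measure_Ici (μ : Measure ℝ) (a : ℝ) :
    ∫⁻ x, ENNReal.ofReal (x - a) ∂μ = ∫⁻ y in Ioi a, μ (Ici y) := by
  have hlevel : ∀ t ∈ Ioi (0 : ℝ), {x | t ≤ max (x - a) 0} = Ici (t + a) := fun t ht => by
    ext x
    simp [not_le.2 (mem_Ioi.1 ht), le_sub_iff_add_le]
  calc ∫⁻ x, ENNReal.ofReal (x - a) ∂μ = ∫⁻ x, ENNReal.ofReal (max (x - a) 0) ∂μ := by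
        simp only [ENNReal.ofReal_max, ENNReal.ofReal_zero, max_zero]
    _ = ∫⁻ t in Ioi 0, μ {x | t ≤ max (x - a) 0} :=
        lintegral_eq_lintegral_meas_le μ (ae_of_all _ fun _ => le_max_right _ _)
          (by fun_prop)
    _ = ∫⁻ t in Ioi 0, μ (Ici (t + a)) :=
        setLIntegral_congr_fun measurableSet_Ioi fun t ht => by rw [hlevel t ht]
    _ = ∫⁻ y in Ioi a, μ (Ici y) := setLIntegral_Ioi_comp_add_right (fun y => μ (Ici y)) a

theorem setLIntegral_measure_Ico_eq_setLIntegral_ofReal_sub (ν : Measure ℝ) {a : ℝ}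
    (ha : 0 ≤ a) :
    ∫⁻ y in Ioo a 1, ν (Ico y 1) = ∫⁻ x in Ioo 0 1, ENNReal.ofReal (x - a) ∂ν := by
  have hsupp : Function.support (fun y => ν (Ico y 1)) ⊆ Iio 1 := fun y hy =>
    mem_Iio.2 <| not_le.1 fun h => hy (by simp [Ico_eq_empty (not_lt.2 h)])
  have hrestrict : EqOn (fun y => ν (Ico y 1)) (fun y => ν.restrict (Ioo 0 1) (Ici y)) (Ioi a) :=
    fun y hy => by
      have hy0 : 0 < y := ha.trans_lt hy
      show ν (Ico y 1) = ν.restrict (Ioo 0 1) (Ici y)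
      rw [Measure.restrict_apply measurableSet_Ici]
      congr 1
      ext x
      simp only [mem_Ico, mem_inter_iff, mem_Ici, mem_Ioo]
      grind
  calc ∫⁻ y in Ioo a 1, ν (Ico y 1)
      = ∫⁻ y in Iio 1, ν (Ico y 1) ∂(volume.restrict (Ioi a)) := by
        rw [Measure.restrict_restrict measurableSet_Iio, inter_comm, Ioi_inter_Iio]
    _ = ∫⁻ y in Ioi a, ν (Ico y 1) := setLIntegral_eq_of_support_subset hsupp
    _ = ∫⁻ y in Ioi a, ν.restrict (Ioo 0 1) (Ici y) :=
        setLIntegral_congr_fun measurableSet_Ioi hrestrict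
    _ = ∫⁻ x in Ioo 0 1, ENNReal.ofReal (x - a) ∂ν :=
        (lintegral_ofReal_sub_eq_setLIntegral_measure_Ici _ a).symm

theorem lintegral_ofReal_sub_one_div_le (μ : Measure ℝ) {u : ℝ} (hu : 0 < u) :
    ∫⁻ x, ENNReal.ofReal (x - 1 / u) ∂μ ≤
      (ENNReal.ofReal u)⁻¹ * ∫⁻ x, ENNReal.ofReal (u * x - Real.sin (u * x)) ∂μ := by
  rw [← lintegral_const_mul _ (by fun_prop)]
  refine lintegral_mono fun x => ?_
  rw [mul_comm, ← div_eq_mul_inv, ← ENNReal.ofReal_div_of_pos hu]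
  refine ENNReal.ofReal_le_ofReal ?_
  rw [le_div_iff₀ hu, sub_mul, one_div_mul_cancel hu.ne']
  linarith [Real.sin_le_one (u * x), mul_comm u x]

theorem tendsto_lintegral_ofReal_sub_one_div_nat {α : Type*} [MeasurableSpace α]
    (μ : Measure α) {f : α → ℝ} (hf : Measurable f) :
    Tendsto (fun n : ℕ => ∫⁻ x, ENNReal.ofReal (f x - 1 / (n + 1)) ∂μ) atTop
      (𝓝 (∫⁻ x, ENNReal.ofReal (f x) ∂μ)) := by
  refine lintegral_tendsto_of_tendsto_of_monotone
    (fun n => (hf.sub_const _).ennreal_ofReal.aemeasurable)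
    (ae_of_all _ fun x m n hmn => ENNReal.ofReal_le_ofReal ?_) (ae_of_all _ fun x => ?_)
  · gcongr
  · simpa [Function.comp_def] using (ENNReal.continuous_ofReal.tendsto _).comp
      (tendsto_const_nhds (x := f x) |>.sub tendsto_one_div_add_atTop_nhds_zero_nat)

theorem stmt_13_general (ν : Measure ℝ)
    (hmom : ∫⁻ x in Set.Ioo (0 : ℝ) 1, ENNReal.ofReal x ∂ν = ∞) :
    (∀ u : ℝ, 1 < u →
      ∫⁻ y in Set.Ioo (1/u) 1, ν (Set.Ico y 1) ≤
        (ENNReal.ofReal u)⁻¹ *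
          ∫⁻ x in Set.Ioo (0 : ℝ) 1, ENNReal.ofReal (u * x - Real.sin (u * x)) ∂ν) ∧
    Tendsto (fun u : ℝ => (ENNReal.ofReal u)⁻¹ *
        ∫⁻ x in Set.Ioo (0 : ℝ) 1, ENNReal.ofReal (u * x - Real.sin (u * x)) ∂ν)
      atTop (nhds ⊤) := by
  refine ⟨fun u hu => ?_, ENNReal.tendsto_nhds_top fun M => ?_⟩
  · rw [setLIntegral_measure_Ico_eq_setLIntegral_ofReal_sub ν (by positivity)]
    exact lintegral_ofReal_sub_one_div_le _ (by linarith)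
  have hseq : Tendsto (fun n : ℕ => ∫⁻ x in Ioo 0 1, ENNReal.ofReal (x - 1 / (n + 1)) ∂ν) atTop
      (𝓝 ∞) := hmom ▸ tendsto_lintegral_ofReal_sub_one_div_nat _ measurable_id
  obtain ⟨n, hn⟩ := (hseq.eventually (lt_mem_nhds coe_lt_top)).exists
  filter_upwards [eventually_ge_atTop ((n : ℝ) + 1)] with u hu
  have hu0 : 0 < u := by linarith [n.cast_nonneg (α := ℝ)]
  calc (M : ℝ≥0∞) < ∫⁻ x in Ioo 0 1, ENNReal.ofReal (x - 1 / (n + 1)) ∂ν := hn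
    _ ≤ ∫⁻ x in Ioo 0 1, ENNReal.ofReal (x - 1 / u) ∂ν :=
        lintegral_mono fun x => ENNReal.ofReal_le_ofReal (by gcongr)
    _ ≤ _ := lintegral_ofReal_sub_one_div_le _ hu0

/-- Let `ν` be a measure supported on `(0,1)` with `ν((x,1)) < ∞` for all `x ∈ (0,1)`
but `∫_{(0,1)} x ν(dx) = ∞`. Then for every `u > 1`,
`(1/u)·∫_{(0,1)} (ux - sin(ux)) ν(dx) ≥ ∫_{(1/u,1)} ν([y,1)) dy`,
and the left-hand side tends to `∞` as `u → ∞` (in the extended reals). -/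
theorem stmt_13 (ν : Measure ℝ) (hsupp : ν ((Set.Ioo (0 : ℝ) 1)ᶜ) = 0)
    (hfin : ∀ x ∈ Set.Ioo (0 : ℝ) 1, ν (Set.Ioo x 1) < ∞)
    (hmom : ∫⁻ x in Set.Ioo (0 : ℝ) 1, ENNReal.ofReal x ∂ν = ∞) :
    (∀ u : ℝ, 1 < u →
      ∫⁻ y in Set.Ioo (1/u) 1, ν (Set.Ico y 1) ≤
        (ENNReal.ofReal u)⁻¹ *
          ∫⁻ x in Set.Ioo (0 : ℝ) 1, ENNReal.ofReal (u * x - Real.sin (u * x)) ∂ν) ∧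
    Tendsto (fun u : ℝ => (ENNReal.ofReal u)⁻¹ *
        ∫⁻ x in Set.Ioo (0 : ℝ) 1, ENNReal.ofReal (u * x - Real.sin (u * x)) ∂ν)
      atTop (nhds ⊤) :=
  stmt_13_general ν hmom
end

section
/- Define h : (e^e, ∞) → ℝ by h(x) = log(1 + sin(log x)² · x · (log x)²). Then h'(x) → 0 as x → ∞, and consequently the function ρ with ρ(1/x) = 1 + sin(log log x)² · log x · (log log x)² for x > e^e is slowly varying at 0. -/
/-!
Karamata's representation: if `ρ(y) = f(log(1/y))` with `(log f)' → 0`, then by the mean value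
theorem `log f(u - log c) - log f(u) → 0`, i.e. `ρ(c y)/ρ(y) → 1`. For
`f(x) = 1 + sin(log x)² x (log x)²`, write `t = |sin(log x)| √x log x`, so `f = 1 + t²`; every term
of `f'` is `t` or `t²` times a factor that tends to `0`, and `2t ≤ 1 + t²`, `t² ≤ 1 + t²`.
-/

open Real Filter Topology

def SlowlyVaryingAtZero (ρ : ℝ → ℝ) : Prop :=
  ∀ c : ℝ, 0 < c → Tendsto (fun y => ρ (c * y) / ρ y) (𝓝[>] 0) (𝓝 1)

theorem tendsto_comp_add_sub_of_tendsto_deriv {g : ℝ → ℝ}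
    (hd : ∀ᶠ x in atTop, DifferentiableAt ℝ g x) (hg : Tendsto (deriv g) atTop (𝓝 0)) (a : ℝ) :
    Tendsto (fun u => g (u + a) - g u) atTop (𝓝 0) := by
  rw [Metric.tendsto_nhds]
  intro ε hε
  set C := ε / (|a| + 1)
  have hC : 0 < C := by positivity
  obtain ⟨X, hX⟩ := eventually_atTop.mp
    (hd.and (hg.norm.eventually (gt_mem_nhds (by simpa using hC))))
  filter_upwards [eventually_ge_atTop (X + |a|)] with u hu
  have hmem : u ∈ Set.Ici X := Set.mem_Ici.mpr (by linarith [abs_nonneg a])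
  have hmem_add : u + a ∈ Set.Ici X := Set.mem_Ici.mpr (by linarith [neg_abs_le a])
  have hmvt := (convex_Ici X).norm_image_sub_le_of_norm_deriv_le
    (fun x hx => (hX x hx).1) (fun x hx => (hX x hx).2.le) hmem hmem_add
  simp only [add_sub_cancel_left, norm_eq_abs] at hmvt
  calc dist (g (u + a) - g u) 0 = |g (u + a) - g u| := by rw [dist_zero_right, norm_eq_abs]
    _ ≤ C * |a| := hmvt
    _ < C * (|a| + 1) := by gcongr; linarith
    _ = ε := div_mul_cancel₀ ε (by positivity)

theorem tendsto_div_comp_add_of_tendsto_deriv_log {f : ℝ → ℝ} (hpos : ∀ᶠ x in atTop, 0 < f x)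
    (hd : ∀ᶠ x in atTop, DifferentiableAt ℝ (fun x => log (f x)) x)
    (hf : Tendsto (deriv fun x => log (f x)) atTop (𝓝 0)) (a : ℝ) :
    Tendsto (fun u => f (u + a) / f u) atTop (𝓝 1) := by
  have h := (continuous_exp.tendsto 0).comp (tendsto_comp_add_sub_of_tendsto_deriv hd hf a)
  rw [exp_zero] at h
  refine h.congr' ?_
  filter_upwards [hpos, (tendsto_atTop_add_const_right _ a tendsto_id).eventually hpos]
    with u hu (hua : 0 < f (u + a))
  simp only [Function.comp_apply, exp_sub, exp_log hu, exp_log hua]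

theorem slowlyVaryingAtZero_of_tendsto_deriv_log {f : ℝ → ℝ} (hpos : ∀ᶠ x in atTop, 0 < f x)
    (hd : ∀ᶠ x in atTop, DifferentiableAt ℝ (fun x => log (f x)) x)
    (hf : Tendsto (deriv fun x => log (f x)) atTop (𝓝 0)) :
    SlowlyVaryingAtZero fun y => f (log (1 / y)) := by
  intro c hc
  have hlog : Tendsto (fun y : ℝ => log (1 / y)) (𝓝[>] 0) atTop := by
    simpa only [one_div, log_inv, Function.comp_def] using
      tendsto_neg_atBot_atTop.comp tendsto_log_nhdsGT_zero
  refine ((tendsto_div_comp_add_of_tendsto_deriv_log hpos hd hf (-log c)).comp hlog).congr' ?_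
  filter_upwards [self_mem_nhdsWithin] with y (hy : 0 < y)
  simp only [Function.comp_apply, one_div, log_inv, log_mul hc.ne' hy.ne']
  ring_nf

noncomputable def osc (x : ℝ) : ℝ := 1 + sin (log x) ^ 2 * x * log x ^ 2

noncomputable def oscDeriv (x : ℝ) : ℝ :=
  2 * sin (log x) * cos (log x) * log x ^ 2 + sin (log x) ^ 2 * log x ^ 2
    + 2 * sin (log x) ^ 2 * log x

theorem osc_pos {x : ℝ} (hx : 0 < x) : 0 < osc x := by
  unfold osc; positivity

theorem hasDerivAt_osc {x : ℝ} (hx : 0 < x) : HasDerivAt osc (oscDeriv x) x := by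
  have hlog := hasDerivAt_log hx.ne'
  have hsin : HasDerivAt (fun y => sin (log y) ^ 2)
      ((2 : ℕ) * sin (log x) ^ 1 * (cos (log x) * x⁻¹)) x :=
    ((hasDerivAt_sin _).comp x hlog).pow 2
  have hlog2 : HasDerivAt (fun y => log y ^ 2) ((2 : ℕ) * log x ^ 1 * x⁻¹) x := hlog.pow 2
  refine (((hsin.mul (hasDerivAt_id x)).mul hlog2).const_add 1).congr_deriv ?_
  simp only [oscDeriv, id, Pi.mul_apply]
  field_simp
  ring

theorem hasDerivAt_log_osc {x : ℝ} (hx : 0 < x) :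
    HasDerivAt (fun y => log (osc y)) (oscDeriv x / osc x) x :=
  (hasDerivAt_osc hx).log (osc_pos hx).ne'

theorem abs_oscDeriv_div_osc_le {x : ℝ} (hx : exp 1 ≤ x) :
    |oscDeriv x / osc x| ≤ log x / √x + 1 / x + 2 / (x * log x) := by
  have hx0 : 0 < x := (exp_pos 1).trans_le hx
  have hL : 1 ≤ log x := by rwa [le_log_iff_exp_le hx0]
  have hsqrt : 0 < √x := sqrt_pos.mpr hx0
  set L := log x
  set s := sin L
  set t := |s| * √x * L
  have ht : 0 ≤ t := by positivity
  have hosc : osc x = 1 + t ^ 2 := by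
    simp only [osc, t, mul_pow, sq_abs, sq_sqrt hx0.le]; ring
  have hderiv : |oscDeriv x| ≤ 2 * t * (L / √x) + t ^ 2 * (1 / x + 2 / (x * L)) := by
    have hcos : |s * cos L| ≤ |s| := by
      rw [abs_mul]; exact mul_le_of_le_one_right (abs_nonneg s) (abs_cos_le_one L)
    have hexpand : 2 * t * (L / √x) + t ^ 2 * (1 / x + 2 / (x * L))
        = 2 * |s| * L ^ 2 + s ^ 2 * L ^ 2 + 2 * s ^ 2 * L := by
      simp only [t, mul_pow, sq_abs, sq_sqrt hx0.le]; field_simp; ring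
    rw [hexpand, oscDeriv]
    calc |2 * s * cos L * L ^ 2 + s ^ 2 * L ^ 2 + 2 * s ^ 2 * L|
        ≤ |2 * s * cos L * L ^ 2| + s ^ 2 * L ^ 2 + 2 * s ^ 2 * L := by
          refine (abs_add_three _ _ _).trans_eq ?_
          rw [abs_of_nonneg (by positivity : 0 ≤ s ^ 2 * L ^ 2),
            abs_of_nonneg (by positivity : 0 ≤ 2 * s ^ 2 * L)]
      _ = 2 * L ^ 2 * |s * cos L| + s ^ 2 * L ^ 2 + 2 * s ^ 2 * L := by
          rw [show 2 * s * cos L * L ^ 2 = 2 * L ^ 2 * (s * cos L) by ring, abs_mul,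
            abs_of_nonneg (by positivity : (0 : ℝ) ≤ 2 * L ^ 2)]
      _ ≤ 2 * L ^ 2 * |s| + s ^ 2 * L ^ 2 + 2 * s ^ 2 * L := by gcongr
      _ = 2 * |s| * L ^ 2 + s ^ 2 * L ^ 2 + 2 * s ^ 2 * L := by ring
  rw [abs_div, abs_of_pos (osc_pos hx0), div_le_iff₀ (osc_pos hx0), hosc]
  have hA : 0 ≤ L / √x := by positivity
  have hB : 0 ≤ 1 / x + 2 / (x * L) := by positivity
  nlinarith [mul_nonneg (sq_nonneg (t - 1)) hA]

theorem tendsto_log_div_sqrt_add_inv_add_div_mul_log :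
    Tendsto (fun x : ℝ => log x / √x + 1 / x + 2 / (x * log x)) atTop (𝓝 0) := by
  have hlog : Tendsto (fun x : ℝ => log x / √x) atTop (𝓝 0) := by
    simpa only [sqrt_eq_rpow] using
      (isLittleO_log_rpow_atTop (by norm_num : (0 : ℝ) < 1 / 2)).tendsto_div_nhds_zero
  have hinv : Tendsto (fun x : ℝ => 1 / x) atTop (𝓝 0) := by
    simpa only [one_div] using tendsto_inv_atTop_zero
  have hmul : Tendsto (fun x : ℝ => 2 / (x * log x)) atTop (𝓝 0) :=
    tendsto_const_nhds.div_atTop (tendsto_id.atTop_mul_atTop₀ tendsto_log_atTop)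
  simpa using (hlog.add hinv).add hmul

theorem tendsto_deriv_log_osc : Tendsto (deriv fun x => log (osc x)) atTop (𝓝 0) := by
  refine squeeze_zero_norm' ?_ tendsto_log_div_sqrt_add_inv_add_div_mul_log
  filter_upwards [eventually_ge_atTop (exp 1)] with x hx
  rw [(hasDerivAt_log_osc ((exp_pos 1).trans_le hx)).deriv, norm_eq_abs]
  exact abs_oscDeriv_div_osc_le hx

/-- For `h(x) = log(1 + sin(log x)²·x·(log x)²)` one has `h'(x) → 0` as `x → ∞`;
consequently the function `ρ` with `ρ(1/x) = 1 + sin(log log x)²·log x·(log log x)²`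
(for `x > e^e`) is slowly varying at `0`, i.e. `ρ(c·y)/ρ(y) → 1` as `y ↓ 0` for every
`c > 0`. -/
theorem stmt_16 :
    Tendsto (deriv fun x : ℝ =>
        Real.log (1 + Real.sin (Real.log x)^2 * x * (Real.log x)^2))
      atTop (nhds 0) ∧
    ∀ c : ℝ, 0 < c →
      Tendsto (fun y : ℝ =>
          (1 + Real.sin (Real.log (Real.log (1/(c*y))))^2 * Real.log (1/(c*y)) *
            (Real.log (Real.log (1/(c*y))))^2) /
          (1 + Real.sin (Real.log (Real.log (1/y)))^2 * Real.log (1/y) *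
            (Real.log (Real.log (1/y)))^2))
        (nhdsWithin 0 (Set.Ioi 0)) (nhds 1) := by
  have hpos : ∀ᶠ x in atTop, 0 < osc x := by
    filter_upwards [eventually_gt_atTop 0] with x hx using osc_pos hx
  have hd : ∀ᶠ x in atTop, DifferentiableAt ℝ (fun x => log (osc x)) x := by
    filter_upwards [eventually_gt_atTop 0] with x hx
    exact (hasDerivAt_log_osc hx).differentiableAt
  exact ⟨tendsto_deriv_log_osc,
    slowlyVaryingAtZero_of_tendsto_deriv_log hpos hd tendsto_deriv_log_osc⟩
end

section
/- For every k ∈ ℕ and u ∈ ℝ, sin(kπ + u)² ≤ u². Consequently, sin(log log u)² · (log log u)² ≤ 1 for all u in the interval [exp(e^{kπ - 1/(kπ)}), exp(e^{kπ})], and ∫_{e^e}^∞ du / ( u (1 + sin(log log u)² · log u · (log log u)²) ) = ∞, since this integral dominates Σ_{k=1}^∞ ∫_{exp(e^{kπ-1/(kπ)})}^{exp(e^{kπ})} du/(2 u log u) = Σ_{k=1}^∞ 1/(2kπ). -/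
/-!
On `[exp (exp (kπ - 1/(kπ))), exp (exp (kπ))]` the variable `t = log (log u)` lies within
`1/(kπ)` of the zero `kπ` of `sin`, so `sin² t · t² ≤ (1/(kπ))² (kπ)² = 1` and the integrand is
at least `1 / (2 u log u)`. Since `log ∘ log` is a primitive of `1 / (u log u)`, each such
interval contributes at least `1 / (2kπ)`, and the harmonic series diverges.
-/

open Real MeasureTheory ENNReal Set

lemma sin_sq_nat_mul_pi_add_le (k : ℕ) (u : ℝ) : sin (k * π + u) ^ 2 ≤ u ^ 2 := by
  have hsign : ((-1 : ℝ) ^ k) ^ 2 = 1 := by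
    rw [← pow_mul, mul_comm, pow_mul, neg_one_sq, one_pow]
  calc sin (k * π + u) ^ 2 = sin u ^ 2 := by
        rw [add_comm, sin_add_nat_mul_pi, mul_pow, hsign, one_mul]
    _ ≤ u ^ 2 := sin_sq_le_sq

lemma one_lt_nat_mul_pi {k : ℕ} (hk : 1 ≤ k) : 1 < (k : ℝ) * π := by
  have : (1 : ℝ) ≤ k := by exact_mod_cast hk
  nlinarith [pi_gt_three]

lemma sin_sq_mul_sq_le_one {k : ℕ} (hk : 1 ≤ k) {t : ℝ}
    (ht : t ∈ Icc (k * π - 1 / (k * π)) (k * π)) :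
    sin t ^ 2 * t ^ 2 ≤ 1 := by
  set c : ℝ := k * π
  have hc : 1 < c := one_lt_nat_mul_pi hk
  have hinv : 1 / c < 1 := (div_lt_one (by linarith)).2 hc
  have hsin : sin t ^ 2 ≤ (1 / c) ^ 2 := by
    calc sin t ^ 2 = sin (c + (t - c)) ^ 2 := by ring_nf
      _ ≤ (t - c) ^ 2 := sin_sq_nat_mul_pi_add_le k (t - c)
      _ ≤ (1 / c) ^ 2 := by nlinarith [ht.1, ht.2]
  have ht_sq : t ^ 2 ≤ c ^ 2 := by nlinarith [ht.1, ht.2]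
  calc sin t ^ 2 * t ^ 2 ≤ (1 / c) ^ 2 * c ^ 2 := by gcongr
    _ = 1 := by field_simp

lemma log_log_mem_Icc {a b u : ℝ} (hu : u ∈ Icc (exp (exp a)) (exp (exp b))) :
    log (log u) ∈ Icc a b := by
  have hu_pos : 0 < u := (exp_pos _).trans_le hu.1
  have hlog_pos : 0 < log u := (exp_pos a).trans_le ((le_log_iff_exp_le hu_pos).2 hu.1)
  refine ⟨(le_log_iff_exp_le hlog_pos).2 ((le_log_iff_exp_le hu_pos).2 hu.1), ?_⟩
  exact (log_le_iff_le_exp hlog_pos).2 ((log_le_iff_le_exp hu_pos).2 hu.2)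

lemma lintegral_Ioc_exp_exp_one_div_mul_log {a b : ℝ} (hab : a ≤ b) :
    ∫⁻ x in Ioc (exp (exp a)) (exp (exp b)), ENNReal.ofReal (1 / (x * log x)) =
      ENNReal.ofReal (b - a) := by
  have hAB : exp (exp a) ≤ exp (exp b) := exp_le_exp.2 (exp_le_exp.2 hab)
  have hpos : ∀ x ∈ uIcc (exp (exp a)) (exp (exp b)), 0 < x ∧ 0 < log x := fun x hx => by
    rw [uIcc_of_le hAB] at hx
    have hx_pos : 0 < x := (exp_pos _).trans_le hx.1
    exact ⟨hx_pos, (exp_pos a).trans_le ((le_log_iff_exp_le hx_pos).2 hx.1)⟩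
  have hderiv : ∀ x ∈ uIcc (exp (exp a)) (exp (exp b)),
      HasDerivAt (fun y => log (log y)) (1 / (x * log x)) x := fun x hx => by
    obtain ⟨hx_pos, hlog_pos⟩ := hpos x hx
    convert (hasDerivAt_log hx_pos.ne').log hlog_pos.ne' using 1
    rw [inv_eq_one_div, div_div]
  have hcont : ContinuousOn (fun x : ℝ => 1 / (x * log x)) (uIcc (exp (exp a)) (exp (exp b))) :=
    fun x hx => by
      obtain ⟨hx_pos, hlog_pos⟩ := hpos x hx
      exact (continuousAt_const.div (continuousAt_id.mul (continuousAt_log hx_pos.ne'))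
        (mul_pos hx_pos hlog_pos).ne').continuousWithinAt
  have hnonneg : 0 ≤ᵐ[volume.restrict (Ioc (exp (exp a)) (exp (exp b)))]
      fun x => 1 / (x * log x) := by
    refine ae_restrict_of_forall_mem measurableSet_Ioc fun x hx => ?_
    obtain ⟨hx_pos, hlog_pos⟩ := hpos x (by rw [uIcc_of_le hAB]; exact Ioc_subset_Icc_self hx)
    positivity
  rw [← ofReal_integral_eq_lintegral_ofReal hcont.intervalIntegrable.1 hnonneg,
    ← intervalIntegral.integral_of_le hAB,
    intervalIntegral.integral_eq_sub_of_hasDerivAt hderiv hcont.intervalIntegrable]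
  simp only [log_exp]

lemma one_div_two_mul_one_div_mul_log_le {u : ℝ} (hu : 0 < u) (hlog : 1 ≤ log u)
    (hsin : sin (log (log u)) ^ 2 * log (log u) ^ 2 ≤ 1) :
    1 / 2 * (1 / (u * log u)) ≤
      1 / (u * (1 + sin (log (log u)) ^ 2 * log u * log (log u) ^ 2)) := by
  have hden : 1 + sin (log (log u)) ^ 2 * log u * log (log u) ^ 2 ≤ 2 * log u := by
    nlinarith [mul_le_mul_of_nonneg_right hsin (zero_le_one.trans hlog)]
  rw [one_div_mul_one_div]
  refine one_div_le_one_div_of_le (by positivity) ?_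
  calc u * (1 + sin (log (log u)) ^ 2 * log u * log (log u) ^ 2) ≤ u * (2 * log u) := by gcongr
    _ = 2 * (u * log u) := by ring

lemma ofReal_one_div_two_pi_mul_le_lintegral {k : ℕ} (hk : 1 ≤ k) :
    ENNReal.ofReal (1 / (2 * π * k)) ≤
      ∫⁻ u in Ioc (exp (exp (k * π - 1 / (k * π)))) (exp (exp (k * π))),
        ENNReal.ofReal (1 / (u * (1 + sin (log (log u)) ^ 2 * log u * log (log u) ^ 2))) := by
  set I := Ioc (exp (exp (k * π - 1 / (k * π)))) (exp (exp (k * π)))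
  have hc := one_lt_nat_mul_pi hk
  have hinv_pos : 0 < 1 / ((k : ℝ) * π) := by positivity
  have hinv_lt : 1 / ((k : ℝ) * π) < 1 := (div_lt_one (by linarith)).2 hc
  calc ENNReal.ofReal (1 / (2 * π * k))
      = ENNReal.ofReal (1 / 2) * ENNReal.ofReal (k * π - (k * π - 1 / (k * π))) := by
        rw [← ofReal_mul (by norm_num)]
        congr 1
        field_simp
        ring
    _ = ENNReal.ofReal (1 / 2) * ∫⁻ u in I, ENNReal.ofReal (1 / (u * log u)) := by
        rw [lintegral_Ioc_exp_exp_one_div_mul_log (by linarith)]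
    _ = ∫⁻ u in I, ENNReal.ofReal (1 / 2) * ENNReal.ofReal (1 / (u * log u)) :=
        (lintegral_const_mul' _ _ ofReal_ne_top).symm
    _ ≤ _ := setLIntegral_mono' measurableSet_Ioc fun u hu => by
        have hu_pos : 0 < u := (exp_pos _).trans hu.1
        have hlog : 1 ≤ log u :=
          (one_le_exp (by linarith)).trans ((le_log_iff_exp_le hu_pos).2 hu.1.le)
        rw [← ofReal_mul (by norm_num)]
        exact ofReal_le_ofReal (one_div_two_mul_one_div_mul_log_le hu_pos hlog
          (sin_sq_mul_sq_le_one hk (log_log_mem_Icc (Ioc_subset_Icc_self hu))))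

lemma tsum_ofReal_one_div_mul_natCast_add_eq_top {c : ℝ} (hc : 0 < c) (m : ℕ) :
    ∑' n : ℕ, ENNReal.ofReal (1 / (c * ↑(n + m))) = ∞ := by
  by_contra h
  have hsum : Summable fun n : ℕ => 1 / (c * ↑(n + m)) := by
    simpa only [toReal_ofReal (one_div_nonneg.2 (mul_nonneg hc.le (Nat.cast_nonneg _)))]
      using ENNReal.summable_toReal h
  apply Real.not_summable_one_div_natCast
  rw [← summable_nat_add_iff m]
  refine (hsum.mul_left c).congr fun n => ?_
  field_simp

lemma exp_exp_nat_mul_pi_le (k : ℕ) :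
    exp (exp (k * π)) ≤ exp (exp (↑(k + 1) * π - 1 / (↑(k + 1) * π))) := by
  have hc := one_lt_nat_mul_pi (Nat.le_add_left 1 k)
  have hinv_lt : 1 / ((↑(k + 1) : ℝ) * π) < 1 := (div_lt_one (by linarith)).2 hc
  gcongr
  push_cast at hinv_lt ⊢
  linarith [pi_gt_three]

/-- (a) For every `k ∈ ℕ` and `u ∈ ℝ`, `sin(kπ + u)² ≤ u²`.
(b) Consequently `sin(log log u)²·(log log u)² ≤ 1` for
`u ∈ [exp(e^{kπ - 1/(kπ)}), exp(e^{kπ})]` (`k ≥ 1`).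
(c) Hence `∫_{e^e}^∞ du/(u(1 + sin(log log u)²·log u·(log log u)²)) = ∞`. -/
theorem stmt_17 :
    (∀ (k : ℕ) (u : ℝ), Real.sin (k * π + u)^2 ≤ u^2) ∧
    (∀ k : ℕ, 1 ≤ k → ∀ u ∈ Set.Icc (Real.exp (Real.exp (k * π - 1/(k * π))))
        (Real.exp (Real.exp (k * π))),
      Real.sin (Real.log (Real.log u))^2 * (Real.log (Real.log u))^2 ≤ 1) ∧
    (∫⁻ u in Set.Ioi (Real.exp (Real.exp 1)),
        ENNReal.ofReal (1 / (u * (1 + Real.sin (Real.log (Real.log u))^2 *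
          Real.log u * (Real.log (Real.log u))^2))) = ∞) := by
  refine ⟨sin_sq_nat_mul_pi_add_le, fun k hk u hu => sin_sq_mul_sq_le_one hk (log_log_mem_Icc hu),
    top_le_iff.1 ?_⟩
  set F : ℝ → ℝ≥0∞ := fun u => ENNReal.ofReal (1 / (u * (1 + sin (log (log u)) ^ 2 *
    log u * log (log u) ^ 2)))
  set B : ℕ → ℝ := fun n => exp (exp (↑(n + 1) * π))
  have hB_mono : Monotone B := fun m n h => by simp only [B]; gcongr
  have hB_ge (n : ℕ) : exp (exp 1) ≤ B n := by
    simp only [B]; gcongr; exact (one_lt_nat_mul_pi (Nat.le_add_left 1 n)).le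
  calc ∞ = ∑' n : ℕ, ENNReal.ofReal (1 / (2 * π * ↑(n + 2))) :=
        (tsum_ofReal_one_div_mul_natCast_add_eq_top (by positivity) 2).symm
    _ ≤ ∑' n, ∫⁻ u in Ioc (B n) (B (n + 1)), F u := ENNReal.tsum_le_tsum fun n =>
        (ofReal_one_div_two_pi_mul_le_lintegral (Nat.le_add_left 1 (n + 1))).trans
          (lintegral_mono_set (Ioc_subset_Ioc_left (exp_exp_nat_mul_pi_le (n + 1))))
    _ = ∫⁻ u in ⋃ n, Ioc (B n) (B (n + 1)), F u :=
        (lintegral_iUnion (fun _ => measurableSet_Ioc) hB_mono.pairwise_disjoint_on_Ioc_succ F).symm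
    _ ≤ ∫⁻ u in Ioi (exp (exp 1)), F u :=
        lintegral_mono_set (iUnion_subset fun n =>
          Ioc_subset_Ioi_self.trans (Ioi_subset_Ioi (hB_ge n)))
end

section
/- Fix α ∈ (1,2), an integer η > 2/(2-α), and set a_n = 2^{-η^n}. Then Σ_{n=1}^∞ a_n^{1-α} = ∞, and for c = c_+ + c_- > 0 the quantity c · Σ_{k=1}^∞ a_k^{-α} (1 - cos(2π a_k / a_n)) is bounded above by 4 c π² Σ_{k=1}^∞ 2^{-η^n((2-α)η^k - 2)}, which tends to 0 as n → ∞. -/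
open Real Filter ENNReal

/-!
With `a_n = 2^{-η^n}`, every term `a_n^{1-α} = 2^{(α-1)η^n}` is at least `1`, so the first series
diverges. In the second series the ratio `a_k / a_n = 2^{η^n - η^k}` is an integer for `k ≤ n`,
so these terms vanish, while for `k > n` the bound `1 - cos x ≤ x² / 2` gives the term bound
`2π² · 2^{2η^n - (2-α)η^k}`. With `δ = (2-α)η - 2 > 0`, the `j`-th term of the comparison
series is at most `r_n^{j+1}` for `r_n = 2^{-δη^n}`, so that series is dominated by
`r_n / (1 - r_n)`, which tends to `0`.
-/

lemma cos_two_pi_mul_two_rpow_neg_div_eq_one {p q : ℕ} (h : p ≤ q) :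
    cos (2 * π * (2 : ℝ) ^ (-(p : ℝ)) / (2 : ℝ) ^ (-(q : ℝ))) = 1 := by
  have hratio : (2 : ℝ) ^ (-(p : ℝ)) / (2 : ℝ) ^ (-(q : ℝ)) = ((2 ^ (q - p) : ℕ) : ℝ) := by
    rw [← rpow_sub two_pos, Nat.cast_pow, Nat.cast_ofNat, ← Real.rpow_natCast, Nat.cast_sub h]
    congr 1
    ring
  rw [mul_div_assoc, hratio, mul_comm]
  exact cos_nat_mul_two_pi _

lemma two_rpow_neg_rpow_mul_one_sub_cos_le (α x y : ℝ) :
    ((2 : ℝ) ^ (-x)) ^ (-α) * (1 - cos (2 * π * 2 ^ (-x) / 2 ^ (-y)))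
      ≤ 2 * π ^ 2 * 2 ^ (2 * y - (2 - α) * x) := by
  have hratio : 2 * π * (2 : ℝ) ^ (-x) / 2 ^ (-y) = 2 * π * 2 ^ (y - x) := by
    rw [mul_div_assoc, ← rpow_sub two_pos, neg_sub_neg]
  rw [hratio, ← rpow_mul zero_le_two]
  calc (2 : ℝ) ^ (-x * -α) * (1 - cos (2 * π * 2 ^ (y - x)))
      ≤ 2 ^ (-x * -α) * ((2 * π * 2 ^ (y - x)) ^ 2 / 2) := by
        gcongr
        linarith [one_sub_sq_div_two_le_cos (x := 2 * π * 2 ^ (y - x))]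
    _ = 2 * π ^ 2 * (2 ^ (-x * -α) * 2 ^ ((y - x) * (2 : ℕ))) := by
        rw [rpow_mul_natCast zero_le_two]
        ring
    _ = 2 * π ^ 2 * 2 ^ (2 * y - (2 - α) * x) := by
        rw [← rpow_add two_pos]
        ring_nf

section Comparison

variable {β : ℝ} {η : ℕ}

lemma two_rpow_neg_pow_mul_le_pow_succ (hη : 2 ≤ η) (hδ : 0 ≤ β * η - 2) (n k : ℕ) :
    (2 : ℝ) ^ (-(η : ℝ) ^ n * (β * (η : ℝ) ^ (k + 1) - 2))
      ≤ ((2 : ℝ) ^ (-((β * η - 2) * (η : ℝ) ^ n))) ^ (k + 1) := by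
  rw [← rpow_mul_natCast zero_le_two]
  apply Real.rpow_le_rpow_of_exponent_le one_le_two
  have hk : (k + 1 : ℝ) ≤ (η : ℝ) ^ k := by exact_mod_cast Nat.lt_pow_self hη
  have hexp : (β * η - 2) * (k + 1) ≤ β * (η : ℝ) ^ (k + 1) - 2 := by
    have hone : (1 : ℝ) ≤ (η : ℝ) ^ k := by linarith [k.cast_nonneg (α := ℝ)]
    rw [pow_succ]
    nlinarith [mul_le_mul_of_nonneg_left hk hδ]
  push_cast
  nlinarith [mul_le_mul_of_nonneg_left hexp (pow_nonneg (Nat.cast_nonneg η) n)]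

lemma summable_and_tsum_le_of_le_pow_succ {f : ℕ → ℝ} {r : ℝ} (hf : ∀ k, 0 ≤ f k)
    (hfr : ∀ k, f k ≤ r ^ (k + 1)) (hr : r < 1) :
    Summable f ∧ ∑' k, f k ≤ r / (1 - r) := by
  have hr0 : 0 ≤ r := by simpa using (hf 0).trans (hfr 0)
  have hgeom : HasSum (fun k => r ^ (k + 1)) (r / (1 - r)) := by
    simpa only [pow_succ', div_eq_mul_inv] using (hasSum_geometric_of_lt_one hr0 hr).mul_left r
  have hsum : Summable f := hgeom.summable.of_nonneg_of_le hf hfr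
  exact ⟨hsum, hasSum_le hfr hsum.hasSum hgeom⟩

lemma summable_and_tsum_two_rpow_neg_pow_mul_le (hη : 2 ≤ η) (hδ : 0 < β * η - 2) (n : ℕ) :
    (Summable fun k : ℕ => (2 : ℝ) ^ (-(η : ℝ) ^ n * (β * (η : ℝ) ^ (k + 1) - 2))) ∧
      ∑' k : ℕ, (2 : ℝ) ^ (-(η : ℝ) ^ n * (β * (η : ℝ) ^ (k + 1) - 2))
        ≤ (2 : ℝ) ^ (-((β * η - 2) * (η : ℝ) ^ n))
          / (1 - (2 : ℝ) ^ (-((β * η - 2) * (η : ℝ) ^ n))) :=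
  summable_and_tsum_le_of_le_pow_succ (fun _ => (rpow_pos_of_pos two_pos _).le)
    (two_rpow_neg_pow_mul_le_pow_succ hη hδ.le n)
    (rpow_lt_one_of_one_lt_of_neg one_lt_two (neg_neg_of_pos (by positivity)))

lemma tendsto_tsum_two_rpow_neg_pow_mul (hη : 2 ≤ η) (hδ : 0 < β * η - 2) :
    Tendsto (fun n : ℕ => ∑' k : ℕ, (2 : ℝ) ^ (-(η : ℝ) ^ n * (β * (η : ℝ) ^ (k + 1) - 2)))
      atTop (nhds 0) := by
  set r : ℕ → ℝ := fun n => (2 : ℝ) ^ (-((β * η - 2) * (η : ℝ) ^ n))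
  have hr : Tendsto r atTop (nhds 0) := by
    have hpow : Tendsto (fun n : ℕ => (η : ℝ) ^ n) atTop atTop :=
      tendsto_pow_atTop_atTop_of_one_lt (by exact_mod_cast hη)
    exact (tendsto_rpow_atBot_of_base_gt_one 2 one_lt_two).comp
      (tendsto_neg_atTop_atBot.comp (hpow.const_mul_atTop hδ))
  have hbound : Tendsto (fun n => r n / (1 - r n)) atTop (nhds 0) := by
    have h := hr.div (tendsto_const_nhds (x := (1 : ℝ)).sub hr) (by norm_num)
    rw [sub_zero, zero_div] at h
    exact h
  exact squeeze_zero (fun n => tsum_nonneg fun k => (rpow_pos_of_pos two_pos _).le)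
    (fun n => (summable_and_tsum_two_rpow_neg_pow_mul_le hη hδ n).2) hbound

end Comparison

lemma tsum_two_rpow_neg_pow_mul_one_sub_cos_le {α : ℝ} {η : ℕ} (hη : 2 ≤ η)
    (hδ : 0 < (2 - α) * η - 2) (n : ℕ) :
    ∑' k : ℕ, ((2 : ℝ) ^ (-(η : ℝ) ^ (k + 1))) ^ (-α)
        * (1 - cos (2 * π * (2 : ℝ) ^ (-(η : ℝ) ^ (k + 1)) / (2 : ℝ) ^ (-(η : ℝ) ^ n)))
      ≤ 2 * π ^ 2 * ∑' k : ℕ, (2 : ℝ) ^ (-(η : ℝ) ^ n * ((2 - α) * (η : ℝ) ^ (k + 1) - 2)) := by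
  set f : ℕ → ℝ := fun k => ((2 : ℝ) ^ (-(η : ℝ) ^ (k + 1))) ^ (-α)
    * (1 - cos (2 * π * (2 : ℝ) ^ (-(η : ℝ) ^ (k + 1)) / (2 : ℝ) ^ (-(η : ℝ) ^ n)))
  have hvanish : ∀ k < n, f k = 0 := fun k hk => by
    have hcos := cos_two_pi_mul_two_rpow_neg_div_eq_one
      (Nat.pow_le_pow_right (by omega : 0 < η) hk : η ^ (k + 1) ≤ η ^ n)
    push_cast at hcos
    simp only [f, hcos, sub_self, mul_zero]
  have htail : ∀ j, f (j + n) ≤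
      2 * π ^ 2 * (2 : ℝ) ^ (-(η : ℝ) ^ n * ((2 - α) * (η : ℝ) ^ (j + 1) - 2)) := fun j => by
    convert two_rpow_neg_rpow_mul_one_sub_cos_le α ((η : ℝ) ^ (j + n + 1)) ((η : ℝ) ^ n) using 3
    rw [show j + n + 1 = n + (j + 1) by ring, pow_add]
    ring
  have hsum := (summable_and_tsum_two_rpow_neg_pow_mul_le hη hδ n).1.mul_left (2 * π ^ 2)
  have hf : Summable f := (summable_nat_add_iff n).mp <| hsum.of_nonneg_of_le
    (fun j => mul_nonneg (rpow_pos_of_pos (rpow_pos_of_pos two_pos _) _).le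
      (sub_nonneg.mpr (cos_le_one _))) htail
  rw [← hf.sum_add_tsum_nat_add n, Finset.sum_eq_zero fun k hk => hvanish k
    (Finset.mem_range.mp hk), zero_add, ← tsum_mul_left]
  exact ((summable_nat_add_iff n).mpr hf).tsum_le_tsum htail hsum

lemma tsum_ofReal_two_rpow_neg_pow_rpow_eq_top {α : ℝ} (hα : 1 ≤ α) (η : ℕ) :
    ∑' n : ℕ, ENNReal.ofReal (((2 : ℝ) ^ (-(η : ℝ) ^ (n + 1))) ^ (1 - α)) = ∞ := by
  refine top_unique ((ENNReal.tsum_const_eq_top_of_ne_zero one_ne_zero).ge.trans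
    (ENNReal.tsum_le_tsum fun n => ENNReal.one_le_ofReal.mpr ?_))
  rw [← rpow_mul zero_le_two]
  exact one_le_rpow one_le_two (by nlinarith [pow_nonneg (Nat.cast_nonneg (α := ℝ) η) (n + 1)])

/-- Orey's example: fix `α ∈ (1,2)`, an integer `η > 2/(2-α)` and `a_n = 2^{-η^n}`.
Then `Σ_{n≥1} a_n^{1-α} = ∞`, and for `c > 0` and every `n ≥ 1`,
`c·Σ_{k≥1} a_k^{-α}(1 - cos(2π a_k/a_n)) ≤ 4cπ²·Σ_{k≥1} 2^{-η^n((2-α)η^k - 2)}`,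
the right-hand side tending to `0` as `n → ∞`. -/
theorem stmt_18 (α : ℝ) (hα : α ∈ Set.Ioo (1 : ℝ) 2) (η : ℕ)
    (hη : 2 / (2 - α) < (η : ℝ))
    (a : ℕ → ℝ) (ha : ∀ n : ℕ, a n = (2 : ℝ) ^ (-((η : ℝ)) ^ n))
    (c : ℝ) (hc : 0 < c) :
    (∑' n : ℕ, ENNReal.ofReal ((a (n+1)) ^ (1 - α)) = ∞) ∧
    (∀ n : ℕ, 1 ≤ n →
      c * ∑' k : ℕ, (a (k+1)) ^ (-α) * (1 - Real.cos (2 * π * (a (k+1)) / (a n)))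
        ≤ 4 * c * π^2 *
          ∑' k : ℕ, (2 : ℝ) ^ (-((η : ℝ)) ^ n * ((2 - α) * ((η : ℝ)) ^ (k+1) - 2))) ∧
    Tendsto (fun n : ℕ => 4 * c * π^2 *
        ∑' k : ℕ, (2 : ℝ) ^ (-((η : ℝ)) ^ n * ((2 - α) * ((η : ℝ)) ^ (k+1) - 2)))
      atTop (nhds 0) := by
  obtain ⟨hα1, hα2⟩ := hα
  have hδ : 0 < (2 - α) * η - 2 := by
    rw [div_lt_iff₀ (by linarith)] at hη
    linarith
  have hη2 : 2 ≤ η := by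
    have : (2 : ℝ) < η := by nlinarith
    exact_mod_cast this.le
  obtain rfl : a = fun n => (2 : ℝ) ^ (-(η : ℝ) ^ n) := funext ha
  refine ⟨tsum_ofReal_two_rpow_neg_pow_rpow_eq_top hα1.le η, fun n _ => ?_, ?_⟩
  · have hS : 0 ≤ ∑' k : ℕ, (2 : ℝ) ^ (-(η : ℝ) ^ n * ((2 - α) * (η : ℝ) ^ (k + 1) - 2)) :=
      tsum_nonneg fun k => (rpow_pos_of_pos two_pos _).le
    calc _ ≤ c * (2 * π ^ 2 * _) :=
          mul_le_mul_of_nonneg_left (tsum_two_rpow_neg_pow_mul_one_sub_cos_le hη2 hδ n) hc.le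
      _ ≤ _ := by nlinarith [mul_nonneg (mul_nonneg hc.le (sq_nonneg π)) hS]
  · simpa using (tendsto_tsum_two_rpow_neg_pow_mul hη2 hδ).const_mul (4 * c * π ^ 2)
end
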